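/- arXiv:2205.10050 — 4 statements merged into one kernel-verified Lean document; each statement's English description precedes it below -/
import Mathlib

section
/- With the sequence (a_k) as in the construction, for every k ≥ 1 and every index j with 1 ≤ j ≤ n, the partial sum S_{j,k} = Σ_{h=0}^{k} 1/a_{nh+j}, written as a fraction in lowest terms, has denominator exactly a_{nk+j}. -/
open Filter Finset

/-- Linear form approximation function: minimum of |b₀ + Σ bⱼξⱼ| over nonzero
integer vectors with `max_{1≤i≤n} |b_i| ≤ Q`. -/
noncomputable def psiStar {n : ℕ} (x : Fin n → ℝ) (Q : ℕ) : ℝ :=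
  sInf {r : ℝ | ∃ b : Fin (n + 1) → ℤ, b ≠ 0 ∧ (∀ i : Fin n, |b i.succ| ≤ (Q : ℤ)) ∧
    r = |(b 0 : ℝ) + ∑ i : Fin n, (b i.succ : ℝ) * x i|}

/-- Dirichlet constant `Θ*(x) = limsup_{Q→∞} Qⁿ ψ*_x(Q)`. -/
noncomputable def thetaStar {n : ℕ} (x : Fin n → ℝ) : ℝ :=
  Filter.limsup (fun Q : ℕ => (Q : ℝ) ^ n * psiStar x Q) Filter.atTop

/-- The recursive sequence of the construction of §2:
`a_j = 8·j!` for `1 ≤ j ≤ n`, `a_{nk+1} = a_{nk}^{M_k}`,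
`a_{nk+j} = a_{nk+1}^j` for `2 ≤ j ≤ n-1`, and
`a_{nk+n} = ⌈c⁻¹ a_{nk+1}⌉ · a_{nk+n-1}`; with the convention `a_0 = 1`. -/
def IsConstrSeq (n : ℕ) (c : ℝ) (M : ℕ → ℕ) (a : ℕ → ℕ) : Prop :=
  a 0 = 1 ∧
  (∀ j, 1 ≤ j → j ≤ n → a j = 8 * Nat.factorial j) ∧
  (∀ k, 1 ≤ k → a (n * k + 1) = a (n * k) ^ M k) ∧
  (∀ k, 1 ≤ k → ∀ j, 2 ≤ j → j ≤ n - 1 → a (n * k + j) = a (n * k + 1) ^ j) ∧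
  (∀ k, 1 ≤ k → a (n * k + n) = ⌈c⁻¹ * (a (n * k + 1) : ℝ)⌉₊ * a (n * k + n - 1))

/-- `ξ_j = Σ_{h≥0} 1/a_{nh+j}`. -/
noncomputable def xiCoord (a : ℕ → ℕ) (n j : ℕ) : ℝ := ∑' h : ℕ, (1 : ℝ) / (a (n * h + j))

/-- The vector `x = (ξ₁,…,ξₙ)` of the construction. -/
noncomputable def xVec (a : ℕ → ℕ) (n : ℕ) : Fin n → ℝ := fun j => xiCoord a n (j.val + 1)

/-- The rational partial sum `S_{j,k} = Σ_{h=0}^{k} 1/a_{nh+j}`. -/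
def Spartial (a : ℕ → ℕ) (n j k : ℕ) : ℚ := ∑ h ∈ Finset.range (k + 1), (1 : ℚ) / (a (n * h + j))

/-!
Write `S_{j,k} = S_{j,k-1} + 1/m` with `m = a_{nk+j}` and `d = a_{n(k-1)+j}`, the denominator
of `S_{j,k-1}` by induction. In the construction `m` is (up to a cofactor) a high power of a
number whose `i`-th power is divisible by `d`, so `d ∣ m` and the cofactor `m / d` is divisible by
every prime factor of `m`. Hence `S_{j,k} = (num · m/d + 1) / m` with a numerator congruent to `1`
modulo every prime of `m`, and the fraction is already in lowest terms.
-/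

theorem Rat.den_add_one_div_natCast {q : ℚ} {m : ℕ} (hm : 0 < m) (hdvd : q.den ∣ m)
    (hprime : ∀ p, p.Prime → p ∣ m → q.den * p ∣ m) : (q + 1 / m).den = m := by
  obtain ⟨e, rfl⟩ := hdvd
  have hval : q + 1 / ((q.den * e : ℕ) : ℚ) =
      ((q.num * e + 1 : ℤ) : ℚ) / ((q.den * e : ℕ) : ℤ) := by
    have he : (e : ℚ) ≠ 0 := by rintro h; simp_all
    nth_rw 1 [← Rat.num_div_den q]
    push_cast
    field_simp
  have hcop : (q.num * e + 1).natAbs.Coprime (q.den * e) := by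
    refine Nat.coprime_of_dvd fun p hp hpN hpm => hp.one_lt.ne' ?_
    have hpe : (p : ℤ) ∣ q.num * e :=
      dvd_mul_of_dvd_right (Int.natCast_dvd_natCast.mpr
        (Nat.dvd_of_mul_dvd_mul_left q.pos (hprime p hp hpm))) _
    have hp1 : (p : ℤ) ∣ 1 := (Int.dvd_add_right hpe).mp (Int.natCast_dvd.mpr hpN)
    exact_mod_cast Int.eq_one_of_dvd_one (Int.natCast_nonneg p) hp1
  have hden := Rat.den_div_eq_of_coprime (Int.natCast_pos.mpr hm) hcop
  rw [hval]
  exact_mod_cast hden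

theorem Nat.mul_prime_dvd_mul_pow {d x C i e p : ℕ} (hd : d ∣ x ^ i) (hie : i < e)
    (hp : p.Prime) (hpm : p ∣ C * x ^ e) : d * p ∣ C * x ^ e := by
  rcases hp.dvd_mul.mp hpm with hpC | hpx
  · calc d * p ∣ x ^ i * C := mul_dvd_mul hd hpC
      _ ∣ x ^ e * C := mul_dvd_mul_right (pow_dvd_pow x hie.le) C
      _ = C * x ^ e := mul_comm _ _
  · calc d * p ∣ x ^ i * x := mul_dvd_mul hd (hp.dvd_of_dvd_pow hpx)
      _ = x ^ (i + 1) := (pow_succ x i).symm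
      _ ∣ x ^ e := pow_dvd_pow x hie
      _ ∣ C * x ^ e := dvd_mul_left _ C

theorem Spartial_succ (a : ℕ → ℕ) (n j k : ℕ) :
    Spartial a n j (k + 1) = Spartial a n j k + 1 / a (n * (k + 1) + j) :=
  sum_range_succ _ _

namespace IsConstrSeq

variable {n : ℕ} {c : ℝ} {M : ℕ → ℕ} {a : ℕ → ℕ}

theorem apply_of_le_sub_one (ha : IsConstrSeq n c M a) {k : ℕ} (hk : 1 ≤ k) {j : ℕ}
    (hj : 1 ≤ j) (hjn : j ≤ n - 1) : a (n * k + j) = a (n * k + 1) ^ j := by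
  rcases hj.eq_or_lt with rfl | hj
  · rw [pow_one]
  · exact ha.2.2.2.1 k hk j hj hjn

theorem apply_last (hn : 2 ≤ n) (ha : IsConstrSeq n c M a) {k : ℕ} (hk : 1 ≤ k) :
    a (n * k + n) = ⌈c⁻¹ * (a (n * k + 1) : ℝ)⌉₊ * a (n * k + 1) ^ (n - 1) := by
  rw [ha.2.2.2.2 k hk, show n * k + n - 1 = n * k + (n - 1) by omega,
    ha.apply_of_le_sub_one hk (by omega) le_rfl]

theorem pos (hn : 2 ≤ n) (hc : 0 < c) (ha : IsConstrSeq n c M a) (k : ℕ) {j : ℕ}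
    (hj : 1 ≤ j) (hjn : j ≤ n) : 0 < a (n * k + j) := by
  induction k generalizing j with
  | zero =>
    rw [mul_zero, zero_add, ha.2.1 j hj hjn]
    positivity
  | succ k ih =>
    have hbase : 0 < a (n * (k + 1) + 1) := by
      rw [ha.2.2.1 (k + 1) k.succ_pos, show n * (k + 1) = n * k + n by ring]
      exact pow_pos (ih (by omega) le_rfl) _
    rcases le_or_gt j (n - 1) with hj' | hj'
    · rw [ha.apply_of_le_sub_one k.succ_pos hj hj']
      exact pow_pos hbase _
    · rw [show j = n by omega, ha.apply_last hn k.succ_pos]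
      have hceil : 0 < ⌈c⁻¹ * (a (n * (k + 1) + 1) : ℝ)⌉₊ := by
        rw [Nat.ceil_pos]
        positivity
      exact Nat.mul_pos hceil (pow_pos hbase _)

theorem dvd_pow_succ (hn : 2 ≤ n) (ha : IsConstrSeq n c M a) (k : ℕ) {j : ℕ}
    (hj : 1 ≤ j) (hjn : j ≤ n - 1) : a (n * k + j) ∣ a (n * (k + 1)) ^ j := by
  rw [show n * (k + 1) = n * k + n by ring]
  rcases k.eq_zero_or_pos with rfl | hk
  · rw [mul_zero, zero_add, zero_add, ha.2.1 j hj (by omega), ha.2.1 n (by omega) le_rfl]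
    exact (mul_dvd_mul_left 8 (Nat.factorial_dvd_factorial (by omega))).trans
      (dvd_pow_self _ (by omega))
  · rw [ha.apply_of_le_sub_one hk hj hjn, ha.apply_last hn hk]
    exact pow_dvd_pow_of_dvd (dvd_mul_of_dvd_right (dvd_pow_self _ (by omega)) _) _

theorem exists_succ_eq_mul_pow (hn : 2 ≤ n) (hM : ∀ k, 2 ≤ M k) (ha : IsConstrSeq n c M a)
    (k : ℕ) {j : ℕ} (hj : 1 ≤ j) (hjn : j ≤ n) :
    ∃ x C i e, a (n * k + j) ∣ x ^ i ∧ i < e ∧ a (n * (k + 1) + j) = C * x ^ e := by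
  set A := a (n * (k + 1))
  have hnext : a (n * (k + 1) + 1) = A ^ M (k + 1) := ha.2.2.1 (k + 1) k.succ_pos
  have hM' := hM (k + 1)
  rcases le_or_gt j (n - 1) with hj' | hj'
  · refine ⟨A, 1, j, M (k + 1) * j, ha.dvd_pow_succ hn k hj hj', by nlinarith, ?_⟩
    rw [ha.apply_of_le_sub_one k.succ_pos hj hj', hnext, one_mul, pow_mul]
  · rw [show j = n by omega]
    refine ⟨A, ⌈c⁻¹ * (a (n * (k + 1) + 1) : ℝ)⌉₊, 1, M (k + 1) * (n - 1), ?_, ?_, ?_⟩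
    · rw [pow_one, show n * k + n = n * (k + 1) by ring]
    · have : 1 ≤ n - 1 := by omega
      nlinarith
    · rw [ha.apply_last hn k.succ_pos, pow_mul, ← hnext]

theorem den_spartial (hn : 2 ≤ n) (hc : 0 < c) (hM : ∀ k, 2 ≤ M k)
    (ha : IsConstrSeq n c M a) (k : ℕ) {j : ℕ} (hj : 1 ≤ j) (hjn : j ≤ n) :
    (Spartial a n j k).den = a (n * k + j) := by
  induction k with
  | zero =>
    simp only [Spartial, zero_add, range_one, sum_singleton, mul_zero, one_div]
    exact Rat.inv_natCast_den_of_pos (by simpa using ha.pos hn hc 0 hj hjn)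
  | succ k ih =>
    obtain ⟨x, C, i, e, hdx, hie, hsucc⟩ := ha.exists_succ_eq_mul_pow hn hM k hj hjn
    rw [Spartial_succ]
    refine Rat.den_add_one_div_natCast (ha.pos hn hc (k + 1) hj hjn) ?_ fun p hp hpm => ?_
    · rw [ih, hsucc]
      exact (hdx.trans (pow_dvd_pow x hie.le)).mul_left C
    · rw [ih]
      rw [hsucc] at hpm ⊢
      exact Nat.mul_prime_dvd_mul_pow hdx hie hp hpm

end IsConstrSeq

theorem partial_sum_denominator (n : ℕ) (hn : 2 ≤ n) (c : ℝ) (hc : c ∈ Set.Ioo (0:ℝ) 1) (M : ℕ → ℕ)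
    (hM : ∀ k, 2 ≤ M k) (a : ℕ → ℕ) (ha : IsConstrSeq n c M a) :
    ∀ k, 1 ≤ k → ∀ j, 1 ≤ j → j ≤ n → (Spartial a n j k).den = a (n * k + j) :=
  fun k _ _ hj hjn => ha.den_spartial hn hc.1 hM k hj hjn
end

section
/- With the construction of §2 (sequence (a_k) and ξ_j = Σ_h 1/a_{nh+j}), for Q in the range [a_{nk+1}, a_{n(k+1)}) the choice b₁ = a_{nk+1}, b₂ = ⋯ = bₙ = 0, and b₀ = −Σ_{h=0}^{k} a_{nk+1}/a_{nh+1} gives an integer vector with max|b_j| ≤ Q and |b₀ + b₁ξ₁| = a_{nk+1} · Σ_{h≥k+1} 1/a_{nh+1} ≤ 2 a_{nk+1}/a_{n(k+1)+1}. -/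
open Filter Finset

/-!
Each term of the construction is an integer multiple, by a factor at least `2`, of the previous
one. Hence `a_{nh+1} ∣ a_{nk+1}` for `h ≤ k`, which makes `b₀` an integer, and the subsequence
`a_{nh+1}` at least doubles at each step, so the tail `Σ_{h>k} 1/a_{nh+1}` is dominated by a
geometric series and is at most twice its first term.
-/

section Lacunary

variable {b : ℕ → ℕ}

theorem two_pow_mul_le_of_two_mul_le_succ (hb : ∀ m, 2 * b m ≤ b (m + 1)) (k d : ℕ) :
    2 ^ d * b k ≤ b (d + k) := by
  induction d with
  | zero => simp
  | succ d ih =>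
    calc 2 ^ (d + 1) * b k = 2 * (2 ^ d * b k) := by ring
      _ ≤ 2 * b (d + k) := by omega
      _ ≤ b (d + 1 + k) := by rw [Nat.add_right_comm]; exact hb _

theorem two_mul_le_of_two_mul_le_succ_comp (hb : ∀ m, 2 * b m ≤ b (m + 1)) {n : ℕ}
    (hn : 1 ≤ n) (r h : ℕ) : 2 * b (n * h + r) ≤ b (n * (h + 1) + r) :=
  calc 2 * b (n * h + r) ≤ 2 ^ n * b (n * h + r) :=
        Nat.mul_le_mul_right _ (by simpa using Nat.pow_le_pow_right two_pos hn)
    _ ≤ b (n + (n * h + r)) := two_pow_mul_le_of_two_mul_le_succ hb _ n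
    _ = b (n * (h + 1) + r) := by congr 1; ring

theorem one_div_le_of_two_mul_le_succ (hb : ∀ m, 2 * b m ≤ b (m + 1)) {k : ℕ} (hk : 0 < b k)
    (m : ℕ) : 1 / (b (m + k) : ℝ) ≤ (1 / 2) ^ m * (1 / b k) := by
  rw [one_div_pow, one_div_mul_one_div]
  apply one_div_le_one_div_of_le (by positivity)
  exact_mod_cast two_pow_mul_le_of_two_mul_le_succ hb k m

theorem summable_one_div_add_of_two_mul_le_succ (hb : ∀ m, 2 * b m ≤ b (m + 1)) {k : ℕ}
    (hk : 0 < b k) : Summable fun m => 1 / (b (m + k) : ℝ) :=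
  (summable_geometric_two.mul_right _).of_nonneg_of_le (fun _ => by positivity)
    (one_div_le_of_two_mul_le_succ hb hk)

theorem tsum_one_div_add_le_of_two_mul_le_succ (hb : ∀ m, 2 * b m ≤ b (m + 1)) {k : ℕ}
    (hk : 0 < b k) : ∑' m, 1 / (b (m + k) : ℝ) ≤ 2 / b k :=
  calc ∑' m, 1 / (b (m + k) : ℝ) ≤ ∑' m : ℕ, (1 / 2 : ℝ) ^ m * (1 / b k) :=
        (summable_one_div_add_of_two_mul_le_succ hb hk).tsum_le_tsum
          (one_div_le_of_two_mul_le_succ hb hk) (summable_geometric_two.mul_right _)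
    _ = 2 / b k := by rw [tsum_mul_right, tsum_geometric_two, mul_one_div]

theorem exists_intCast_eq_neg_sum_div {k : ℕ} (hb : ∀ h ≤ k, b h ∣ b k) :
    ∃ z : ℤ, (z : ℝ) = -∑ h ∈ range (k + 1), (b k : ℝ) / b h := by
  refine ⟨-∑ h ∈ range (k + 1), ((b k / b h : ℕ) : ℤ), ?_⟩
  simp only [Int.cast_neg, Int.cast_sum, Int.cast_natCast]
  congr 1
  exact sum_congr rfl fun h hh =>
    Nat.cast_div_charZero (hb h (Nat.lt_succ_iff.mp (mem_range.mp hh)))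

end Lacunary

theorem neg_sum_div_add_mul_tsum_eq {f : ℕ → ℝ} (hf : Summable fun h => 1 / f h) (A : ℝ)
    (k : ℕ) :
    -∑ h ∈ range k, A / f h + A * ∑' h, 1 / f h = A * ∑' h, 1 / f (h + k) := by
  rw [← hf.sum_add_tsum_nat_add k, mul_add, mul_sum]
  simp only [mul_one_div]
  ring

namespace IsConstrSeq

variable {n : ℕ} {c : ℝ} {M : ℕ → ℕ} {a : ℕ → ℕ}

theorem apply_mul_add_eq_pow (ha : IsConstrSeq n c M a) {k j : ℕ} (hk : 1 ≤ k) (hj : 1 ≤ j)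
    (hjn : j ≤ n - 1) : a (n * k + j) = a (n * k + 1) ^ j := by
  obtain rfl | hj := hj.eq_or_lt
  · rw [pow_one]
  · exact ha.2.2.2.1 k hk j hj hjn

theorem exists_succ_eq_mul_of_lt (ha : IsConstrSeq n c M a) {m : ℕ} (hm : m < n) :
    ∃ f, 2 ≤ f ∧ a (m + 1) = f * a m := by
  obtain ⟨h0, hfac, -⟩ := ha
  rcases Nat.eq_zero_or_pos m with rfl | hm0
  · exact ⟨8, by norm_num, by rw [hfac 1 le_rfl hm, h0]; rfl⟩
  · refine ⟨m + 1, by omega, ?_⟩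
    rw [hfac (m + 1) (by omega) hm, hfac m hm0 hm.le, Nat.factorial_succ]
    ring

theorem exists_succ_eq_mul_of_le (ha : IsConstrSeq n c M a) (hc0 : 0 < c) (hc1 : c ≤ 1)
    (hM : ∀ k, 2 ≤ M k) {k j : ℕ} (hk : 1 ≤ k) (hj : j < n)
    (h2 : ∀ i, 1 ≤ i → i ≤ n * k + j → 2 ≤ a i) :
    ∃ f, 2 ≤ f ∧ a (n * k + j + 1) = f * a (n * k + j) := by
  rcases Nat.eq_zero_or_pos j with rfl | hj0
  · have hM1 : 1 ≤ M k - 1 := by have := hM k; omega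
    refine ⟨a (n * k) ^ (M k - 1), ?_, ?_⟩
    · exact (h2 (n * k) (Nat.mul_pos (by omega) hk) le_rfl).trans (Nat.le_self_pow (by omega) _)
    · rw [add_zero, ha.2.2.1 k hk, ← pow_succ, Nat.sub_add_cancel (by omega)]
  have hB := h2 (n * k + 1) le_add_self (by omega)
  rcases Nat.lt_or_ge (j + 1) n with hj1 | hj1
  · refine ⟨a (n * k + 1), hB, ?_⟩
    rw [apply_mul_add_eq_pow ha hk hj0 (by omega), add_assoc,
      apply_mul_add_eq_pow ha hk (by omega) (by omega), pow_succ']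
  · refine ⟨⌈c⁻¹ * a (n * k + 1)⌉₊, ?_, ?_⟩
    · have : (2 : ℝ) ≤ c⁻¹ * a (n * k + 1) :=
        (Nat.ofNat_le_cast.mpr hB).trans
          (le_mul_of_one_le_left (by positivity) ((one_le_inv₀ hc0).mpr hc1))
      exact_mod_cast this.trans (Nat.le_ceil _)
    · have e : n * k + j + 1 = n * k + n := by omega
      have e' : n * k + n - 1 = n * k + j := by omega
      rw [e, ha.2.2.2.2 k hk, e']

theorem exists_succ_eq_mul_of_two_le (ha : IsConstrSeq n c M a) (hn : 1 ≤ n) (hc0 : 0 < c)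
    (hc1 : c ≤ 1) (hM : ∀ k, 2 ≤ M k) {m : ℕ} (h2 : ∀ i, 1 ≤ i → i ≤ m → 2 ≤ a i) :
    ∃ f, 2 ≤ f ∧ a (m + 1) = f * a m := by
  rcases Nat.lt_or_ge m n with hm | hm
  · exact exists_succ_eq_mul_of_lt ha hm
  · have h := exists_succ_eq_mul_of_le ha hc0 hc1 hM ((Nat.one_le_div_iff hn).mpr hm)
      (Nat.mod_lt m hn) (by rwa [Nat.div_add_mod])
    rwa [Nat.div_add_mod] at h

theorem two_le (ha : IsConstrSeq n c M a) (hn : 1 ≤ n) (hc0 : 0 < c) (hc1 : c ≤ 1)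
    (hM : ∀ k, 2 ≤ M k) {m : ℕ} (hm : 1 ≤ m) : 2 ≤ a m := by
  suffices ∀ N i, 1 ≤ i → i ≤ N → 2 ≤ a i from this m m hm le_rfl
  intro N
  induction N with
  | zero => intro i hi hi0; omega
  | succ m ih =>
    intro i hi him
    rcases him.lt_or_eq with him | rfl
    · exact ih i hi (by omega)
    · obtain ⟨f, hf, he⟩ := exists_succ_eq_mul_of_two_le ha hn hc0 hc1 hM ih
      have : 1 ≤ a m := by
        rcases Nat.eq_zero_or_pos m with rfl | hm
        · rw [ha.1]
        · exact one_le_two.trans (ih m hm le_rfl)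
      rw [he]
      nlinarith

theorem exists_succ_eq_mul (ha : IsConstrSeq n c M a) (hn : 1 ≤ n) (hc0 : 0 < c) (hc1 : c ≤ 1)
    (hM : ∀ k, 2 ≤ M k) (m : ℕ) : ∃ f, 2 ≤ f ∧ a (m + 1) = f * a m :=
  exists_succ_eq_mul_of_two_le ha hn hc0 hc1 hM fun _ hi _ => ha.two_le hn hc0 hc1 hM hi

theorem dvd_succ (ha : IsConstrSeq n c M a) (hn : 1 ≤ n) (hc0 : 0 < c) (hc1 : c ≤ 1)
    (hM : ∀ k, 2 ≤ M k) (m : ℕ) : a m ∣ a (m + 1) :=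
  let ⟨f, _, hf⟩ := ha.exists_succ_eq_mul hn hc0 hc1 hM m
  Dvd.intro_left f hf.symm

theorem two_mul_le_succ (ha : IsConstrSeq n c M a) (hn : 1 ≤ n) (hc0 : 0 < c) (hc1 : c ≤ 1)
    (hM : ∀ k, 2 ≤ M k) (m : ℕ) : 2 * a m ≤ a (m + 1) :=
  let ⟨_, h2, hf⟩ := ha.exists_succ_eq_mul hn hc0 hc1 hM m
  hf ▸ Nat.mul_le_mul_right _ h2

end IsConstrSeq

theorem case_one_estimate_general (n : ℕ) (hn : 2 ≤ n) (c : ℝ) (hc : c ∈ Set.Ioo (0:ℝ) 1) (M : ℕ → ℕ)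
    (hM : ∀ k, 2 ≤ M k) (a : ℕ → ℕ) (ha : IsConstrSeq n c M a)
    (k : ℕ) (Q : ℕ) (hQ1 : a (n * k + 1) ≤ Q) :
    (∃ b0 : ℤ, (b0 : ℝ) = -∑ h ∈ Finset.range (k + 1), (a (n * k + 1) : ℝ) / (a (n * h + 1))) ∧
    a (n * k + 1) ≤ Q ∧
    |(-∑ h ∈ Finset.range (k + 1), (a (n * k + 1) : ℝ) / (a (n * h + 1)))
        + (a (n * k + 1) : ℝ) * xiCoord a n 1|
      = (a (n * k + 1) : ℝ) * ∑' h : ℕ, (1 : ℝ) / (a (n * (h + k + 1) + 1)) ∧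
    (a (n * k + 1) : ℝ) * ∑' h : ℕ, (1 : ℝ) / (a (n * (h + k + 1) + 1))
      ≤ 2 * (a (n * k + 1) : ℝ) / (a (n * (k + 1) + 1)) := by
  have hn1 : 1 ≤ n := by omega
  have hdvd : ∀ h, a (n * h + 1) ∣ a (n * (h + 1) + 1) := fun h =>
    Nat.rel_of_forall_rel_succ_of_le (· ∣ ·) (ha.dvd_succ hn1 hc.1 hc.2.le hM) (by nlinarith)
  have h2 : ∀ h, 2 * a (n * h + 1) ≤ a (n * (h + 1) + 1) :=
    two_mul_le_of_two_mul_le_succ_comp (ha.two_mul_le_succ hn1 hc.1 hc.2.le hM) hn1 1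
  have hpos : ∀ h, 0 < a (n * h + 1) := fun h =>
    two_pos.trans_le (ha.two_le hn1 hc.1 hc.2.le hM le_add_self)
  have hsum : Summable fun h => 1 / (a (n * h + 1) : ℝ) := by
    simpa using summable_one_div_add_of_two_mul_le_succ (b := (a <| n * · + 1)) h2 (hpos 0)
  have htail := tsum_one_div_add_le_of_two_mul_le_succ (b := (a <| n * · + 1)) h2 (hpos (k + 1))
  simp only [← add_assoc] at htail
  refine ⟨exists_intCast_eq_neg_sum_div (b := (a <| n * · + 1)) fun h hh =>
    Nat.rel_of_forall_rel_succ_of_le (· ∣ ·) hdvd hh, hQ1, ?_, ?_⟩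
  · rw [xiCoord, neg_sum_div_add_mul_tsum_eq hsum, abs_of_nonneg (by positivity)]
    simp only [← add_assoc]
  · calc _ ≤ (a (n * k + 1) : ℝ) * (2 / a (n * (k + 1) + 1)) := by gcongr
      _ = _ := by ring

theorem case_one_estimate (n : ℕ) (hn : 2 ≤ n) (c : ℝ) (hc : c ∈ Set.Ioo (0:ℝ) 1) (M : ℕ → ℕ)
    (hM : ∀ k, 2 ≤ M k) (a : ℕ → ℕ) (ha : IsConstrSeq n c M a)
    (k : ℕ) (hk : 1 ≤ k) (Q : ℕ) (hQ1 : a (n * k + 1) ≤ Q) (hQ2 : Q < a (n * (k + 1))) :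
    (∃ b0 : ℤ, (b0 : ℝ) = -∑ h ∈ Finset.range (k + 1), (a (n * k + 1) : ℝ) / (a (n * h + 1))) ∧
    a (n * k + 1) ≤ Q ∧
    |(-∑ h ∈ Finset.range (k + 1), (a (n * k + 1) : ℝ) / (a (n * h + 1)))
        + (a (n * k + 1) : ℝ) * xiCoord a n 1|
      = (a (n * k + 1) : ℝ) * ∑' h : ℕ, (1 : ℝ) / (a (n * (h + k + 1) + 1)) ∧
    (a (n * k + 1) : ℝ) * ∑' h : ℕ, (1 : ℝ) / (a (n * (h + k + 1) + 1))
      ≤ 2 * (a (n * k + 1) : ℝ) / (a (n * (k + 1) + 1)) :=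
  case_one_estimate_general n hn c hc M hM a ha k Q hQ1
end

section
/- With the construction of §2, for every k ≥ 1 and 0 ≤ ℓ ≤ k−1 the quantity N_ℓ = a_{nk+1} · a_{nℓ} · (1/a_{n(ℓ+1)} + 1/a_{n(ℓ+2)} + ⋯ + 1/a_{nk}) is a positive integer (with the convention a₀ = 1), and N₀ > N₁ > ⋯ > N_{k−1}. -/
open Filter Finset

section AuxLemmas
variable {n : ℕ} {c : ℝ} {M : ℕ → ℕ} {a : ℕ → ℕ}

lemma constr_step (hn : 2 ≤ n) (ha : IsConstrSeq n c M a) {m : ℕ} (hm : 1 ≤ m) :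
    a (n * (m + 1)) = ⌈c⁻¹ * (a (n * m + 1) : ℝ)⌉₊ * a (n * m + 1) ^ (n - 1) := by
  have h1 : n * (m + 1) = n * m + n := by ring
  have h2 : a (n * m + n - 1) = a (n * m + 1) ^ (n - 1) := by
    rcases eq_or_lt_of_le hn with h | h
    · have : n * m + n - 1 = n * m + 1 := by omega
      rw [this, ← h]
      norm_num
    · have : n * m + n - 1 = n * m + (n - 1) := by omega
      rw [this]
      exact ha.2.2.2.1 m hm (n - 1) (by omega) le_rfl
  rw [h1, ha.2.2.2.2 m hm, h2]

lemma constr_sixteen (hn : 2 ≤ n) (hc : c ∈ Set.Ioo (0:ℝ) 1) (hM : ∀ k, 2 ≤ M k)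
    (ha : IsConstrSeq n c M a) : ∀ m, 1 ≤ m → 16 ≤ a (n * m) := by
  intro m hm
  induction m with
  | zero => omega
  | succ m ih =>
    rcases Nat.eq_or_lt_of_le hm with h | h
    · have hm0 : m = 0 := by omega
      subst hm0
      have hn1 : a (n * (0 + 1)) = 8 * Nat.factorial n := by
        norm_num; exact ha.2.1 n (by omega) le_rfl
      have : 2 ≤ Nat.factorial n := le_trans hn (Nat.self_le_factorial n)
      omega
    · have hm' : 1 ≤ m := by omega
      have h16 := ih hm'
      have ha1 : a (n * m + 1) = a (n * m) ^ M m := ha.2.2.1 m hm'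
      have h16' : 16 ≤ a (n * m + 1) := by
        rw [ha1]
        have hMm : M m ≠ 0 := by have := hM m; omega
        calc (16:ℕ) ≤ a (n * m) := h16
        _ ≤ a (n * m) ^ M m := Nat.le_self_pow hMm _
      have hceil : 1 ≤ ⌈c⁻¹ * (a (n * m + 1) : ℝ)⌉₊ := by
        rw [Nat.one_le_iff_ne_zero, ← Nat.pos_iff_ne_zero, Nat.ceil_pos]
        have hc0 : (0:ℝ) < c⁻¹ := by have := hc.1; positivity
        have hax : (0:ℝ) < (a (n * m + 1) : ℝ) := by exact_mod_cast lt_of_lt_of_le (by norm_num : (0:ℕ) < 16) h16'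
        exact mul_pos hc0 hax
      calc (16:ℕ) ≤ a (n * m + 1) ^ (n - 1) :=
            le_trans h16' (Nat.le_self_pow (by omega) _)
        _ ≤ ⌈c⁻¹ * (a (n * m + 1) : ℝ)⌉₊ * a (n * m + 1) ^ (n - 1) :=
            Nat.le_mul_of_pos_left _ hceil
        _ = a (n * (m + 1)) := (constr_step hn ha hm').symm

lemma constr_pos (hn : 2 ≤ n) (hc : c ∈ Set.Ioo (0:ℝ) 1) (hM : ∀ k, 2 ≤ M k)
    (ha : IsConstrSeq n c M a) : ∀ m, 1 ≤ a (n * m) := by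
  intro m
  rcases Nat.eq_zero_or_pos m with h | h
  · simp [h, ha.1]
  · exact le_trans (by norm_num) (constr_sixteen hn hc hM ha m h)

lemma constr_sq (hn : 2 ≤ n) (hc : c ∈ Set.Ioo (0:ℝ) 1) (hM : ∀ k, 2 ≤ M k)
    (ha : IsConstrSeq n c M a) {m : ℕ} (hm : 1 ≤ m) :
    a (n * m) ^ 2 ≤ a (n * (m + 1)) := by
  have h16 := constr_sixteen hn hc hM ha m hm
  have ha1 : a (n * m + 1) = a (n * m) ^ M m := ha.2.2.1 m hm
  have hceil : 1 ≤ ⌈c⁻¹ * (a (n * m + 1) : ℝ)⌉₊ := by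
    rw [Nat.one_le_iff_ne_zero, ← Nat.pos_iff_ne_zero, Nat.ceil_pos]
    have : (0:ℝ) < (a (n * m + 1) : ℝ) := by
      have : 1 ≤ a (n * m + 1) := by rw [ha1]; exact Nat.one_le_pow _ _ (by omega)
      exact_mod_cast this
    have := hc.1
    positivity
  calc a (n * m) ^ 2 ≤ a (n * m) ^ M m := Nat.pow_le_pow_right (by omega) (hM m)
    _ = a (n * m + 1) := ha1.symm
    _ ≤ a (n * m + 1) ^ (n - 1) := Nat.le_self_pow (by omega) _
    _ ≤ ⌈c⁻¹ * (a (n * m + 1) : ℝ)⌉₊ * a (n * m + 1) ^ (n - 1) := Nat.le_mul_of_pos_left _ hceil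
    _ = a (n * (m + 1)) := (constr_step hn ha hm).symm

lemma constr_double (hn : 2 ≤ n) (hc : c ∈ Set.Ioo (0:ℝ) 1) (hM : ∀ k, 2 ≤ M k)
    (ha : IsConstrSeq n c M a) (m : ℕ) : 2 * a (n * m) ≤ a (n * (m + 1)) := by
  rcases Nat.eq_zero_or_pos m with h | h
  · subst h
    have h16 := constr_sixteen hn hc hM ha 1 le_rfl
    rw [mul_one] at h16
    simp [ha.1]
    omega
  · have h16 := constr_sixteen hn hc hM ha m h
    calc 2 * a (n * m) ≤ a (n * m) * a (n * m) := by nlinarith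
      _ = a (n * m) ^ 2 := (sq _).symm
      _ ≤ a (n * (m + 1)) := constr_sq hn hc hM ha h

lemma constr_dvd_succ (hn : 2 ≤ n) (ha : IsConstrSeq n c M a) (hM : ∀ k, 2 ≤ M k) (m : ℕ) :
    a (n * m) ∣ a (n * (m + 1)) := by
  rcases Nat.eq_zero_or_pos m with h | h
  · subst h; simp [ha.1]
  · rw [constr_step hn ha h, ha.2.2.1 m h]
    exact Dvd.dvd.mul_left (dvd_pow (dvd_pow_self _ (by have := hM m; omega)) (by omega)) _

lemma constr_dvd (hn : 2 ≤ n) (ha : IsConstrSeq n c M a) (hM : ∀ k, 2 ≤ M k) {l m : ℕ}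
    (h : l ≤ m) : a (n * l) ∣ a (n * m) := by
  induction m with
  | zero => simp_all
  | succ m ih =>
    rcases Nat.eq_or_lt_of_le h with h' | h'
    · subst h'; rfl
    · exact dvd_trans (ih (by omega)) (constr_dvd_succ hn ha hM m)

lemma constr_growth4 (hn : 2 ≤ n) (hc : c ∈ Set.Ioo (0:ℝ) 1) (hM : ∀ k, 2 ≤ M k)
    (ha : IsConstrSeq n c M a) (m : ℕ) :
    4 * a (n * (m + 1)) ^ 2 ≤ a (n * m) * a (n * (m + 2)) := by
  rcases Nat.eq_zero_or_pos m with h | h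
  · subst h
    have h16 := constr_sixteen hn hc hM ha 1 le_rfl
    have ha1 : a (n * 1 + 1) = a (n * 1) ^ M 1 := ha.2.2.1 1 le_rfl
    have hMm : M 1 ≠ 0 := by have := hM 1; omega
    have hsq1 : a (n * 1) ^ 2 ≤ a (n * 1 + 1) := by
      rw [ha1]; exact Nat.pow_le_pow_right (by omega) (hM 1)
    have hceil : a (n * 1 + 1) ≤ ⌈c⁻¹ * (a (n * 1 + 1) : ℝ)⌉₊ := by
      have h1 : (1:ℝ) ≤ c⁻¹ := one_le_inv_iff₀.mpr ⟨hc.1, le_of_lt hc.2⟩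
      have h2 : ((a (n * 1 + 1) : ℕ) : ℝ) ≤ c⁻¹ * (a (n * 1 + 1) : ℝ) := by
        nlinarith [Nat.cast_nonneg (α := ℝ) (a (n * 1 + 1))]
      calc a (n * 1 + 1) = ⌈((a (n * 1 + 1) : ℕ) : ℝ)⌉₊ := by rw [Nat.ceil_natCast]
        _ ≤ ⌈c⁻¹ * (a (n * 1 + 1) : ℝ)⌉₊ := Nat.ceil_mono h2
    have hpow : a (n * 1 + 1) ≤ a (n * 1 + 1) ^ (n - 1) := Nat.le_self_pow (by omega) _
    have hbig : a (n * 1 + 1) * a (n * 1 + 1) ≤ a (n * (1 + 1)) := by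
      rw [constr_step hn ha le_rfl]
      exact Nat.mul_le_mul hceil hpow
    simp only [Nat.mul_zero, ha.1, one_mul, Nat.zero_add]
    calc 4 * a (n * 1) ^ 2 ≤ a (n * 1) ^ 2 * a (n * 1) ^ 2 := by nlinarith [Nat.mul_le_mul h16 h16, sq_nonneg (a (n*1))]
      _ ≤ a (n * 1 + 1) * a (n * 1 + 1) := Nat.mul_le_mul hsq1 hsq1
      _ ≤ a (n * (1 + 1)) := hbig
      _ = a (n * 2) := by norm_num
  · have h16 := constr_sixteen hn hc hM ha m h
    have hsq := constr_sq hn hc hM ha (m := m + 1) (by omega)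
    calc 4 * a (n * (m + 1)) ^ 2 ≤ 16 * a (n * (m + 1)) ^ 2 := by omega
      _ ≤ a (n * m) * a (n * (m + 1)) ^ 2 := Nat.mul_le_mul_right _ h16
      _ ≤ a (n * m) * a (n * (m + 2)) := Nat.mul_le_mul_left _ hsq


lemma icc_split {l k : ℕ} (h : l + 1 ≤ k) :
    Finset.Icc (l + 1) k = insert (l + 1) (Finset.Icc (l + 2) k) := by
  ext x
  simp only [Finset.mem_Icc, Finset.mem_insert]
  omega

lemma constr_sum_upper (hn : 2 ≤ n) (hc : c ∈ Set.Ioo (0:ℝ) 1) (hM : ∀ k, 2 ≤ M k)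
    (ha : IsConstrSeq n c M a) (k : ℕ) :
    ∀ d l, k = l + 1 + d →
      (∑ m ∈ Finset.Icc (l + 1) k, (1:ℚ) / (a (n * m))) ≤ 2 / (a (n * (l + 1))) := by
  intro d
  induction d with
  | zero =>
    intro l hl
    subst hl
    have hpos : (0:ℚ) < (a (n * (l + 1)) : ℚ) := by
      exact_mod_cast constr_pos hn hc hM ha (l + 1)
    simp only [Nat.add_zero, Finset.Icc_self, Finset.sum_singleton]
    rw [div_le_div_iff₀ hpos hpos]
    linarith
  | succ d ih =>
    intro l hl
    have h1 : l + 1 ≤ k := by omega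
    have hpos1 : (0:ℚ) < (a (n * (l + 1)) : ℚ) := by
      exact_mod_cast constr_pos hn hc hM ha (l + 1)
    have hpos2 : (0:ℚ) < (a (n * (l + 2)) : ℚ) := by
      exact_mod_cast constr_pos hn hc hM ha (l + 2)
    have hdb : (2:ℚ) * (a (n * (l + 1)) : ℚ) ≤ (a (n * (l + 2)) : ℚ) := by
      exact_mod_cast constr_double hn hc hM ha (l + 1)
    have hsplit := icc_split h1
    rw [hsplit, Finset.sum_insert (by simp [Finset.mem_Icc])]
    have htail := ih (l + 1) (by omega)
    have h2 : (2:ℚ) / (a (n * (l + 2)) : ℚ) ≤ 1 / (a (n * (l + 1)) : ℚ) := by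
      rw [div_le_div_iff₀ hpos2 hpos1]
      linarith
    have : (1:ℚ) / (a (n * (l + 1))) + 2 / (a (n * (l + 1 + 1))) ≤ 2 / (a (n * (l + 1))) := by
      have : n * (l + 1 + 1) = n * (l + 2) := by ring
      rw [this]
      rw [div_add_div _ _ (ne_of_gt hpos1) (ne_of_gt hpos2), div_le_div_iff₀ (by positivity) hpos1]
      nlinarith
    linarith [htail, this]

lemma constr_sum_lower (hn : 2 ≤ n) (hc : c ∈ Set.Ioo (0:ℝ) 1) (hM : ∀ k, 2 ≤ M k)
    (ha : IsConstrSeq n c M a) {k l : ℕ} (h : l < k) :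
    (1:ℚ) / (a (n * (l + 1))) ≤ ∑ m ∈ Finset.Icc (l + 1) k, (1:ℚ) / (a (n * m)) := by
  apply Finset.single_le_sum (f := fun m => (1:ℚ) / (a (n * m)))
  · intro i _
    positivity
  · simp only [Finset.mem_Icc]
    omega

lemma constr_T_step (hn : 2 ≤ n) (hc : c ∈ Set.Ioo (0:ℝ) 1) (hM : ∀ k, 2 ≤ M k)
    (ha : IsConstrSeq n c M a) {k l : ℕ} (h : l + 1 < k) :
    ((a (n * (l + 1)) : ℚ)) * ∑ m ∈ Finset.Icc (l + 2) k, (1:ℚ) / (a (n * m))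
      < ((a (n * l) : ℚ)) * ∑ m ∈ Finset.Icc (l + 1) k, (1:ℚ) / (a (n * m)) := by
  have hpos0 : (0:ℚ) < (a (n * l) : ℚ) := by exact_mod_cast constr_pos hn hc hM ha l
  have hpos1 : (0:ℚ) < (a (n * (l + 1)) : ℚ) := by exact_mod_cast constr_pos hn hc hM ha (l + 1)
  have hpos2 : (0:ℚ) < (a (n * (l + 2)) : ℚ) := by exact_mod_cast constr_pos hn hc hM ha (l + 2)
  have hg4 : (4:ℚ) * (a (n * (l + 1)) : ℚ) ^ 2 ≤ (a (n * l) : ℚ) * (a (n * (l + 2)) : ℚ) := by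
    exact_mod_cast constr_growth4 hn hc hM ha l
  have hupper : (∑ m ∈ Finset.Icc (l + 2) k, (1:ℚ) / (a (n * m))) ≤ 2 / (a (n * (l + 2))) := by
    have := constr_sum_upper hn hc hM ha k (k - (l + 2)) (l + 1) (by omega)
    have e : n * (l + 1 + 1) = n * (l + 2) := by ring
    simpa [e] using this
  have hlower := constr_sum_lower hn hc hM ha (k := k) (l := l) (by omega)
  calc ((a (n * (l + 1)) : ℚ)) * ∑ m ∈ Finset.Icc (l + 2) k, (1:ℚ) / (a (n * m))
      ≤ (a (n * (l + 1)) : ℚ) * (2 / (a (n * (l + 2)))) :=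
        mul_le_mul_of_nonneg_left hupper (le_of_lt hpos1)
    _ < (a (n * l) : ℚ) * (1 / (a (n * (l + 1)))) := by
        rw [mul_div_assoc', mul_one_div, div_lt_div_iff₀ hpos2 hpos1]
        nlinarith
    _ ≤ (a (n * l) : ℚ) * ∑ m ∈ Finset.Icc (l + 1) k, (1:ℚ) / (a (n * m)) :=
        mul_le_mul_of_nonneg_left hlower (le_of_lt hpos0)

end AuxLemmas


theorem N_ell_integral_and_decreasing (n : ℕ) (hn : 2 ≤ n) (c : ℝ) (hc : c ∈ Set.Ioo (0:ℝ) 1) (M : ℕ → ℕ)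
    (hM : ∀ k, 2 ≤ M k) (a : ℕ → ℕ) (ha : IsConstrSeq n c M a) (k : ℕ) (hk : 1 ≤ k) :
    (∀ ℓ, ℓ < k → ∃ N : ℕ, 0 < N ∧
      (N : ℚ) = (a (n * k + 1) : ℚ) * (a (n * ℓ)) * ∑ m ∈ Finset.Icc (ℓ + 1) k, (1 : ℚ) / (a (n * m))) ∧
    (∀ ℓ ℓ', ℓ < ℓ' → ℓ' < k →
      (a (n * k + 1) : ℚ) * (a (n * ℓ')) * ∑ m ∈ Finset.Icc (ℓ' + 1) k, (1 : ℚ) / (a (n * m))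
        < (a (n * k + 1) : ℚ) * (a (n * ℓ)) * ∑ m ∈ Finset.Icc (ℓ + 1) k, (1 : ℚ) / (a (n * m))) := by
  have hak1 : a (n * k + 1) = a (n * k) ^ M k := ha.2.2.1 k hk
  have hdvdk1 : ∀ m, m ≤ k → a (n * m) ∣ a (n * k + 1) := by
    intro m hm
    rw [hak1]
    exact dvd_trans (constr_dvd hn ha hM hm) (dvd_pow_self _ (by have := hM k; omega))
  have hposn : ∀ m, 0 < a (n * m) := fun m => constr_pos hn hc hM ha m
  have hposk1 : 0 < a (n * k + 1) := by
    rw [hak1]; exact Nat.pow_pos (hposn k)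
  constructor
  · intro ℓ hℓ
    refine ⟨∑ m ∈ Finset.Icc (ℓ + 1) k, (a (n * k + 1) / a (n * m)) * a (n * ℓ), ?_, ?_⟩
    · apply Finset.sum_pos
      · intro m hm
        simp only [Finset.mem_Icc] at hm
        exact Nat.mul_pos
          (Nat.div_pos (Nat.le_of_dvd hposk1 (hdvdk1 m hm.2)) (hposn m)) (hposn ℓ)
      · exact ⟨ℓ + 1, by simp only [Finset.mem_Icc]; omega⟩
    · push_cast
      rw [Finset.mul_sum]
      apply Finset.sum_congr rfl
      intro m hm
      simp only [Finset.mem_Icc] at hm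
      have hd : ((a (n * k + 1) / a (n * m) : ℕ) : ℚ) = (a (n * k + 1) : ℚ) / (a (n * m) : ℚ) :=
        Nat.cast_div (hdvdk1 m hm.2) (by exact_mod_cast (hposn m).ne')
      rw [hd]
      field_simp
  · intro ℓ ℓ' hℓℓ' hℓ'
    have hq : (0:ℚ) < (a (n * k + 1) : ℚ) := by exact_mod_cast hposk1
    have key : ∀ l l', l < l' → l' < k →
        ((a (n * l') : ℚ)) * ∑ m ∈ Finset.Icc (l' + 1) k, (1:ℚ) / (a (n * m))
          < ((a (n * l) : ℚ)) * ∑ m ∈ Finset.Icc (l + 1) k, (1:ℚ) / (a (n * m)) := by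
      intro l l'
      induction l' with
      | zero => omega
      | succ l' ih =>
        intro hll' hl'k
        rcases Nat.eq_or_lt_of_le hll' with h | h
        · have : l = l' := by omega
          subst this
          have e : l + 1 + 1 = l + 2 := by ring
          rw [e]
          exact constr_T_step hn hc hM ha hl'k
        · calc ((a (n * (l' + 1)) : ℚ)) * ∑ m ∈ Finset.Icc (l' + 1 + 1) k, (1:ℚ) / (a (n * m))
              < ((a (n * l') : ℚ)) * ∑ m ∈ Finset.Icc (l' + 1) k, (1:ℚ) / (a (n * m)) := by
                have e : l' + 1 + 1 = l' + 2 := by ring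
                rw [e]
                exact constr_T_step hn hc hM ha hl'k
            _ < ((a (n * l) : ℚ)) * ∑ m ∈ Finset.Icc (l + 1) k, (1:ℚ) / (a (n * m)) :=
                ih (by omega) (by omega)
    have := key ℓ ℓ' hℓℓ' hℓ'
    rw [mul_assoc, mul_assoc]
    exact mul_lt_mul_of_pos_left this hq
end

section
/- With the construction of §2, let Q = a_{nk+1} − 1. Then every nonzero integer vector (b₀,…,bₙ) with max_{1≤j≤n}|b_j| ≤ Q satisfies |b₀ + Σ_{j=1}^n b_j ξ_j| ≥ c(1 − o(1)) Q^{−n} as k → ∞. Consequently Θ*(x) ≥ c. -/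
open Filter Finset

lemma psiSet_nonempty {n : ℕ} (x : Fin n → ℝ) (Q : ℕ) :
    ∃ r : ℝ, r ∈ {r : ℝ | ∃ b : Fin (n + 1) → ℤ, b ≠ 0 ∧ (∀ i : Fin n, |b i.succ| ≤ (Q : ℤ)) ∧
      r = |(b 0 : ℝ) + ∑ i : Fin n, (b i.succ : ℝ) * x i|} := by
  refine ⟨|(1 : ℝ) + ∑ i : Fin n, ((0 : ℤ) : ℝ) * x i|,
    fun i : Fin (n + 1) => if i = 0 then 1 else 0, ?_, ?_, ?_⟩
  · intro h
    have := congrFun h 0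
    simp at this
  · intro i
    have : (Fin.succ i) ≠ 0 := Fin.succ_ne_zero i
    simp [this]
  · simp [Fin.succ_ne_zero]

lemma psiSet_bddBelow {n : ℕ} (x : Fin n → ℝ) (Q : ℕ) :
    BddBelow {r : ℝ | ∃ b : Fin (n + 1) → ℤ, b ≠ 0 ∧ (∀ i : Fin n, |b i.succ| ≤ (Q : ℤ)) ∧
      r = |(b 0 : ℝ) + ∑ i : Fin n, (b i.succ : ℝ) * x i|} := by
  refine ⟨0, fun r hr => ?_⟩
  obtain ⟨b, _, _, rfl⟩ := hr
  positivity

/-- Dirichlet pigeonhole bound. -/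
lemma dirichlet_psi {n : ℕ} (hn : 1 ≤ n) (x : Fin n → ℝ) (Q : ℕ) (hQ : 1 ≤ Q) :
    psiStar x Q ≤ 1 / (Q : ℝ) ^ n := by
  classical
  set S : (Fin n → Fin (Q + 1)) → ℝ := fun t => ∑ i : Fin n, ((t i : ℕ) : ℝ) * x i with hS
  have hP : 0 < Q ^ n := Nat.pow_pos (by omega)
  have hPr : (0 : ℝ) < ((Q ^ n : ℕ) : ℝ) := by exact_mod_cast hP
  set F : (Fin n → Fin (Q + 1)) → Fin (Q ^ n) := fun t =>
    ⟨⌊Int.fract (S t) * ((Q ^ n : ℕ) : ℝ)⌋₊, by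
      rw [Nat.floor_lt (mul_nonneg (Int.fract_nonneg _) (le_of_lt hPr))]
      have h1 : Int.fract (S t) < 1 := Int.fract_lt_one _
      nlinarith [Int.fract_nonneg (S t)]⟩ with hF
  have hcard : Fintype.card (Fin (Q ^ n)) < Fintype.card (Fin n → Fin (Q + 1)) := by
    simp only [Fintype.card_fin, Fintype.card_fun]
    exact Nat.pow_lt_pow_left (by omega) (by omega)
  obtain ⟨t, t', htne, hFeq⟩ := Fintype.exists_ne_map_eq_of_card_lt F hcard
  set u := S t with hu
  set u' := S t' with hu'
  -- fract difference bound
  have hfloor : ⌊Int.fract u * ((Q ^ n : ℕ) : ℝ)⌋₊ = ⌊Int.fract u' * ((Q ^ n : ℕ) : ℝ)⌋₊ := by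
    have := congrArg Fin.val hFeq
    simpa [hF] using this
  have hfr : |Int.fract u - Int.fract u'| < 1 / ((Q ^ n : ℕ) : ℝ) := by
    have f1 : (⌊Int.fract u * ((Q ^ n : ℕ) : ℝ)⌋₊ : ℝ) ≤ Int.fract u * ((Q ^ n : ℕ) : ℝ) :=
      Nat.floor_le (mul_nonneg (Int.fract_nonneg _) (le_of_lt hPr))
    have f2 : Int.fract u * ((Q ^ n : ℕ) : ℝ) < ⌊Int.fract u * ((Q ^ n : ℕ) : ℝ)⌋₊ + 1 :=
      Nat.lt_floor_add_one _
    have f3 : (⌊Int.fract u' * ((Q ^ n : ℕ) : ℝ)⌋₊ : ℝ) ≤ Int.fract u' * ((Q ^ n : ℕ) : ℝ) :=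
      Nat.floor_le (mul_nonneg (Int.fract_nonneg _) (le_of_lt hPr))
    have f4 : Int.fract u' * ((Q ^ n : ℕ) : ℝ) < ⌊Int.fract u' * ((Q ^ n : ℕ) : ℝ)⌋₊ + 1 :=
      Nat.lt_floor_add_one _
    rw [hfloor] at f1 f2
    rw [abs_lt]
    constructor
    · rw [neg_lt, ← sub_lt_iff_lt_add'] at *
      rw [lt_div_iff₀ hPr]
      nlinarith
    · rw [lt_div_iff₀ hPr]
      nlinarith
  -- the vector
  set b : Fin (n + 1) → ℤ := Fin.cases (⌊u'⌋ - ⌊u⌋) (fun i => ((t i : ℕ) : ℤ) - ((t' i : ℕ) : ℤ))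
    with hb
  have hb0 : b 0 = ⌊u'⌋ - ⌊u⌋ := by rw [hb]; simp
  have hbs : ∀ i : Fin n, b i.succ = ((t i : ℕ) : ℤ) - ((t' i : ℕ) : ℤ) := by
    intro i; rw [hb]; simp
  have hbne : b ≠ 0 := by
    obtain ⟨i, hi⟩ := Function.ne_iff.mp htne
    intro h0
    apply hi
    have := congrFun h0 i.succ
    rw [hbs i] at this
    simp only [Pi.zero_apply, sub_eq_zero] at this
    exact Fin.ext (by exact_mod_cast this)
  have hbd : ∀ i : Fin n, |b i.succ| ≤ (Q : ℤ) := by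
    intro i
    rw [hbs i, abs_le]
    have h1 : (t i : ℕ) ≤ Q := Fin.is_le _
    have h2 : (t' i : ℕ) ≤ Q := Fin.is_le _
    constructor <;> [skip; skip] <;> push_cast <;> omega
  have hval : (b 0 : ℝ) + ∑ i : Fin n, (b i.succ : ℝ) * x i = Int.fract u - Int.fract u' := by
    have e1 : ∑ i : Fin n, (b i.succ : ℝ) * x i = u - u' := by
      rw [hu, hu', hS, ← Finset.sum_sub_distrib]
      apply Finset.sum_congr rfl
      intro i _
      rw [hbs i]
      push_cast
      ring
    rw [e1, hb0, Int.fract, Int.fract]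
    push_cast
    ring
  have hmem : |(b 0 : ℝ) + ∑ i : Fin n, (b i.succ : ℝ) * x i| ∈
      {r : ℝ | ∃ b : Fin (n + 1) → ℤ, b ≠ 0 ∧ (∀ i : Fin n, |b i.succ| ≤ (Q : ℤ)) ∧
        r = |(b 0 : ℝ) + ∑ i : Fin n, (b i.succ : ℝ) * x i|} := ⟨b, hbne, hbd, rfl⟩
  have hle := csInf_le (psiSet_bddBelow x Q) hmem
  apply le_trans hle
  rw [hval]
  have hQQ : ((Q : ℝ)) ^ n = ((Q ^ n : ℕ) : ℝ) := by push_cast; rfl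
  rw [hQQ]
  exact le_of_lt hfr


/-- `(1+η)^n ≤ 1 + (2^n - 1) η` for `0 ≤ η ≤ 1`. -/
lemma pow_one_add_le (n : ℕ) (η : ℝ) (h0 : 0 ≤ η) (h1 : η ≤ 1) :
    (1 + η) ^ n ≤ 1 + ((2 : ℝ) ^ n - 1) * η := by
  induction n with
  | zero => norm_num
  | succ n ih =>
    have h2 : (0:ℝ) < 2 ^ n := by positivity
    calc (1 + η) ^ (n + 1) = (1 + η) ^ n * (1 + η) := pow_succ _ _
      _ ≤ (1 + ((2:ℝ) ^ n - 1) * η) * (1 + η) := by nlinarith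
      _ ≤ 1 + ((2:ℝ) ^ (n + 1) - 1) * η := by
          have h3 : (1:ℝ) ≤ 2 ^ n := by
            calc (1:ℝ) = 1 ^ n := (one_pow n).symm
              _ ≤ 2 ^ n := pow_le_pow_left₀ (by norm_num) (by norm_num) n
          rw [pow_succ]
          nlinarith [mul_nonneg (mul_nonneg (sub_nonneg.mpr h3) h0) (sub_nonneg.mpr h1)]

set_option maxHeartbeats 1000000 in
lemma final_numeric (n : ℕ) (hn : 2 ≤ n) (c ε : ℝ) (hc0 : 0 < c) (hc1 : c < 1)
    (hε0 : 0 < ε) (hε1 : ε < 1)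
    (Ar dn A' : ℝ)
    (hAr : 2 ^ (n + 2) / ε + 1 ≤ Ar)
    (hAr2 : 2 ^ (n + 2) * n / (c * ε) ≤ Ar)
    (hdn_up : dn ≤ c⁻¹ * (Ar + 1) ^ n)
    (hdn_low : Ar ^ n ≤ dn)
    (hA' : dn ^ 2 ≤ A') :
    c * (1 - ε) / (Ar - 1) ^ n ≤ 1 / dn - 2 * n * (Ar - 1) / A' := by
  have hp2 : (0:ℝ) < 2 ^ (n + 2) := by positivity
  have hAr1 : (1:ℝ) < Ar := by
    have : (0:ℝ) < 2 ^ (n + 2) / ε := by positivity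
    linarith
  have hX : (0:ℝ) < Ar - 1 := by linarith
  have hY : (0:ℝ) < Ar + 1 := by linarith
  have hArpos : (0:ℝ) < Ar := by linarith
  have hT : (0:ℝ) < Ar ^ n := by positivity
  have hdnpos : (0:ℝ) < dn := lt_of_lt_of_le hT hdn_low
  have hA'pos : (0:ℝ) < A' := lt_of_lt_of_le (by positivity) hA'
  have hXn : (0:ℝ) < (Ar - 1) ^ n := by positivity
  have hYn : (0:ℝ) < (Ar + 1) ^ n := by positivity
  -- η bound
  set η : ℝ := 2 / (Ar - 1) with hη
  have hηpos : 0 < η := by positivity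
  have hη1 : η ≤ ε / 2 ^ (n + 1) := by
    rw [hη, div_le_div_iff₀ hX (by positivity)]
    have h1 : 2 ^ (n + 2) / ε ≤ Ar - 1 := by linarith
    rw [div_le_iff₀ hε0] at h1
    have e : (2:ℝ) * 2 ^ (n + 1) = 2 ^ (n + 2) := by ring
    nlinarith
  have hηle1 : η ≤ 1 := by
    have h1 : ε / 2 ^ (n + 1) ≤ 1 := by
      rw [div_le_one (by positivity)]
      have : (1:ℝ) ≤ 2 ^ (n + 1) := one_le_pow₀ (by norm_num)
      linarith
    linarith
  -- (1+η)^n ≤ 1 + ε/2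
  have hpow : (1 + η) ^ n ≤ 1 + ε / 2 := by
    have h1 := pow_one_add_le n η (le_of_lt hηpos) hηle1
    have h2 : ((2:ℝ) ^ n - 1) * η ≤ 2 ^ n * η := by nlinarith
    have h3 : (2:ℝ) ^ n * η ≤ 2 ^ n * (ε / 2 ^ (n + 1)) := by
      apply mul_le_mul_of_nonneg_left hη1 (by positivity)
    have h4 : (2:ℝ) ^ n * (ε / 2 ^ (n + 1)) = ε / 2 := by
      rw [pow_succ]
      field_simp
    linarith
  -- step 1
  have hYX : (Ar + 1) ^ n = (Ar - 1) ^ n * (1 + η) ^ n := by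
    rw [← mul_pow]
    congr 1
    rw [hη]
    field_simp
    ring
  have step1 : c * (1 - ε) / (Ar - 1) ^ n ≤ c * (1 - ε / 2) / (Ar + 1) ^ n := by
    rw [div_le_div_iff₀ hXn hYn, hYX]
    have h5 : c * (1 - ε) * (1 + η) ^ n ≤ c * (1 - ε) * (1 + ε / 2) := by
      apply mul_le_mul_of_nonneg_left hpow
      nlinarith
    have h6 : c * (1 - ε) * (1 + ε / 2) ≤ c * (1 - ε / 2) := by
      nlinarith [mul_pos hc0 (mul_pos hε0 hε0)]
    calc c * (1 - ε) * ((Ar - 1) ^ n * (1 + η) ^ n)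
        = (c * (1 - ε) * (1 + η) ^ n) * (Ar - 1) ^ n := by ring
      _ ≤ (c * (1 - ε / 2)) * (Ar - 1) ^ n := by nlinarith
  -- 1/dn ≥ c/(Ar+1)^n
  have hinv : c / (Ar + 1) ^ n ≤ 1 / dn := by
    rw [div_le_div_iff₀ hYn hdnpos, one_mul]
    have hcc : c * c⁻¹ = 1 := mul_inv_cancel₀ (ne_of_gt hc0)
    calc c * dn ≤ c * (c⁻¹ * (Ar + 1) ^ n) := mul_le_mul_of_nonneg_left hdn_up (le_of_lt hc0)
      _ = (Ar + 1) ^ n := by rw [← mul_assoc, hcc, one_mul]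
  -- step 2
  have step2 : 2 * n * (Ar - 1) / A' ≤ c * ε / 2 / (Ar + 1) ^ n := by
    rw [div_le_div_iff₀ hA'pos hYn]
    have hnr : (0:ℝ) < (n:ℝ) := by exact_mod_cast (by omega : 0 < n)
    have hYle : (Ar + 1) ^ n ≤ 2 ^ n * Ar ^ n := by
      calc (Ar + 1) ^ n ≤ (2 * Ar) ^ n := by
            apply pow_le_pow_left₀ (by linarith) (by linarith)
        _ = 2 ^ n * Ar ^ n := mul_pow _ _ _
    have hTA2 : Ar ^ 2 ≤ Ar ^ n := pow_le_pow_right₀ (by linarith) hn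
    have hkey : 2 ^ (n + 1) * n * Ar ≤ c * ε / 2 * Ar ^ n := by
      have h1 : 2 ^ (n + 2) * n ≤ c * ε * Ar := by
        rw [div_le_iff₀ (by positivity)] at hAr2
        linarith
      have h2 : c * ε / 2 * Ar ^ 2 ≤ c * ε / 2 * Ar ^ n :=
        mul_le_mul_of_nonneg_left hTA2 (by positivity)
      have h3 : c * ε / 2 * Ar ^ 2 = (c * ε * Ar) * Ar / 2 := by ring
      have h4 : (2 ^ (n + 2) * (n:ℝ)) * Ar ≤ (c * ε * Ar) * Ar := by nlinarith
      have h5 : 2 ^ (n + 1) * (n:ℝ) * Ar = (2 ^ (n + 2) * n) * Ar / 2 := by ring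
      linarith
    -- combine
    calc 2 * (n:ℝ) * (Ar - 1) * (Ar + 1) ^ n
        ≤ 2 * n * Ar * (2 ^ n * Ar ^ n) := by
          apply mul_le_mul (by nlinarith) hYle (by positivity) (by positivity)
      _ = (2 ^ (n + 1) * n * Ar) * Ar ^ n := by ring
      _ ≤ (c * ε / 2 * Ar ^ n) * Ar ^ n := by nlinarith
      _ = c * ε / 2 * (Ar ^ n * Ar ^ n) := by ring
      _ ≤ c * ε / 2 * A' := by
          apply mul_le_mul_of_nonneg_left ?_ (by positivity)
          nlinarith
  -- final combination
  have hsplit : c * (1 - ε / 2) / (Ar + 1) ^ n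
      = c / (Ar + 1) ^ n - c * ε / 2 / (Ar + 1) ^ n := by
    field_simp
  calc c * (1 - ε) / (Ar - 1) ^ n ≤ c * (1 - ε / 2) / (Ar + 1) ^ n := step1
    _ = c / (Ar + 1) ^ n - c * ε / 2 / (Ar + 1) ^ n := hsplit
    _ ≤ 1 / dn - 2 * n * (Ar - 1) / A' := by
        have := step2
        linarith [hinv]

/-- Pure arithmetic descent lemma. -/
lemma descend (n : ℕ) (hn : 2 ≤ n) (A E : ℕ) (hA : 2 ≤ A) (hE : A + 1 ≤ E)
    (p : ℕ → ℕ)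
    (hpA : ∀ j, 1 ≤ j → j ≤ n - 1 → Nat.Coprime (p j) A)
    (hpE : Nat.Coprime (p n) E)
    (β : ℕ → ℤ) (hβ : ∀ j, 1 ≤ j → j ≤ n → |β j| ≤ (A : ℤ) - 1)
    (hN : β 0 * ((E : ℤ) * (A : ℤ) ^ (n - 1))
        + (E : ℤ) * (∑ i ∈ Finset.range (n - 1), β (i + 1) * (p (i + 1) : ℤ) * (A : ℤ) ^ (n - 2 - i))
        + β n * (p n : ℤ) = 0) :
    ∀ j, j ≤ n → β j = 0 := by
  set W : ℕ → ℤ := fun T => β 0 * (A : ℤ) ^ T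
    + ∑ i ∈ Finset.range T, β (i + 1) * (p (i + 1) : ℤ) * (A : ℤ) ^ (T - 1 - i) with hW
  have hApos : (0 : ℤ) < (A : ℤ) := by exact_mod_cast (by omega : 0 < A)
  have hEpos : (0 : ℤ) < (E : ℤ) := by exact_mod_cast (by omega : 0 < E)
  -- eliminate β n
  have hNW : (E : ℤ) * W (n - 1) + β n * (p n : ℤ) = 0 := by
    have hsum : ∑ i ∈ Finset.range (n - 1), β (i + 1) * (p (i + 1) : ℤ) * (A : ℤ) ^ (n - 1 - 1 - i)
        = ∑ i ∈ Finset.range (n - 1), β (i + 1) * (p (i + 1) : ℤ) * (A : ℤ) ^ (n - 2 - i) :=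
      Finset.sum_congr rfl (fun i hi => by
        have h9 : n - 1 - 1 - i = n - 2 - i := by omega
        rw [h9])
    calc (E : ℤ) * W (n - 1) + β n * (p n : ℤ)
        = β 0 * ((E : ℤ) * (A : ℤ) ^ (n - 1))
          + (E : ℤ) * (∑ i ∈ Finset.range (n - 1),
              β (i + 1) * (p (i + 1) : ℤ) * (A : ℤ) ^ (n - 1 - 1 - i))
          + β n * (p n : ℤ) := by simp only [hW]; all_goals ring
      _ = β 0 * ((E : ℤ) * (A : ℤ) ^ (n - 1))
          + (E : ℤ) * (∑ i ∈ Finset.range (n - 1),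
              β (i + 1) * (p (i + 1) : ℤ) * (A : ℤ) ^ (n - 2 - i))
          + β n * (p n : ℤ) := by rw [hsum]
      _ = 0 := hN
  have hβn : β n = 0 := by
    have hdvd : (E : ℤ) ∣ β n * (p n : ℤ) := by
      refine ⟨-(W (n-1)), by linarith⟩
    have hcop : IsCoprime (E : ℤ) ((p n : ℕ) : ℤ) := by
      rw [Int.isCoprime_iff_gcd_eq_one, Int.gcd_natCast_natCast]
      exact (Nat.coprime_comm.mp hpE)
    have hdvd2 : (E : ℤ) ∣ β n := hcop.dvd_of_dvd_mul_right hdvd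
    have habs := hβ n (by omega) le_rfl
    refine Int.eq_zero_of_abs_lt_dvd hdvd2 ?_
    have : ((A : ℤ) + 1) ≤ (E : ℤ) := by exact_mod_cast hE
    omega
  have hWn : W (n - 1) = 0 := by
    rw [hβn, zero_mul, add_zero] at hNW
    exact (mul_eq_zero.mp hNW).resolve_left (by positivity)
  -- recurrence
  have hrec : ∀ T, 1 ≤ T → W T = (A : ℤ) * W (T - 1) + β T * (p T : ℤ) := by
    intro T hT
    obtain ⟨t, rfl⟩ : ∃ t, T = t + 1 := ⟨T - 1, by omega⟩
    simp only [hW, Nat.add_sub_cancel]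
    rw [Finset.sum_range_succ, Nat.sub_self, pow_zero]
    have e1 : ∀ i ∈ Finset.range t, β (i + 1) * (p (i + 1) : ℤ) * (A : ℤ) ^ (t - i)
        = (A : ℤ) * (β (i + 1) * (p (i + 1) : ℤ) * (A : ℤ) ^ (t - 1 - i)) := by
      intro i hi
      rw [Finset.mem_range] at hi
      have h3 : t - i = (t - 1 - i) + 1 := by omega
      rw [h3, pow_succ]
      ring
    rw [Finset.sum_congr rfl e1, ← Finset.mul_sum, pow_succ]
    ring
  -- descent
  have hdesc : ∀ s, s ≤ n - 1 → W (n - 1 - s) = 0 ∧ ∀ j, n - 1 - s < j → j ≤ n - 1 → β j = 0 := by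
    intro s
    induction s with
    | zero => intro _; exact ⟨by simpa using hWn, fun j h1 h2 => by omega⟩
    | succ s ih =>
      intro hs
      obtain ⟨hW0, hβ0⟩ := ih (by omega)
      set t := n - 1 - s with ht
      have ht1 : 1 ≤ t := by omega
      have hrect := hrec t ht1
      rw [hW0] at hrect
      have hβt : β t = 0 := by
        have hdvd : (A : ℤ) ∣ β t * (p t : ℤ) := ⟨-(W (t - 1)), by linarith⟩
        have hcop : IsCoprime ((A : ℕ) : ℤ) ((p t : ℕ) : ℤ) := by
          rw [Int.isCoprime_iff_gcd_eq_one, Int.gcd_natCast_natCast]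
          exact (Nat.coprime_comm.mp (hpA t ht1 (by omega)))
        have hdvd2 : (A : ℤ) ∣ β t := hcop.dvd_of_dvd_mul_right hdvd
        refine Int.eq_zero_of_abs_lt_dvd hdvd2 ?_
        have := hβ t ht1 (by omega)
        omega
      have hWt : W (t - 1) = 0 := by
        rw [hβt, zero_mul, add_zero] at hrect
        have := hrect.symm
        exact (mul_eq_zero.mp this).resolve_left (by positivity)
      constructor
      · have : n - 1 - (s + 1) = t - 1 := by omega
        rw [this]; exact hWt
      · intro j h1 h2
        rcases eq_or_lt_of_le (by omega : t ≤ j) with h | h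
        · rw [← h]; exact hβt
        · exact hβ0 j (by omega) h2
  have hfin := hdesc (n - 1) le_rfl
  have hβ0 : β 0 = 0 := by
    have := hfin.1
    simp only [Nat.sub_self, hW] at this
    simpa using this
  intro j hj
  rcases Nat.eq_zero_or_pos j with rfl | hj1
  · exact hβ0
  rcases eq_or_lt_of_le hj with h | h
  · rw [h]; exact hβn
  · exact hfin.2 j (by omega) (by omega)

lemma constr_decomp (n : ℕ) (hn : 1 ≤ n) (m : ℕ) (hm : 1 ≤ m) :
    ∃ k j, 1 ≤ j ∧ j ≤ n ∧ m = n * k + j := by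
  have h1 := Nat.div_add_mod (m - 1) n
  have h2 : (m - 1) % n < n := Nat.mod_lt _ (by omega)
  exact ⟨(m - 1) / n, (m - 1) % n + 1, by omega, by omega, by omega⟩

section Constr

variable {n : ℕ} {c : ℝ} {M : ℕ → ℕ} {a : ℕ → ℕ}

lemma a_mid (hn : 2 ≤ n) (ha : IsConstrSeq n c M a) :
    ∀ k, 1 ≤ k → ∀ j, 1 ≤ j → j ≤ n - 1 → a (n * k + j) = a (n * k + 1) ^ j := by
  intro k hk j h1 h2
  rcases eq_or_lt_of_le h1 with h | h
  · rw [← h, pow_one]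
  · exact ha.2.2.2.1 k hk j h h2

lemma a_last (hn : 2 ≤ n) (ha : IsConstrSeq n c M a) :
    ∀ k, 1 ≤ k → a (n * k + n) = ⌈c⁻¹ * (a (n * k + 1) : ℝ)⌉₊ * a (n * k + 1) ^ (n - 1) := by
  intro k hk
  have h := ha.2.2.2.2 k hk
  have h2 : n * k + n - 1 = n * k + (n - 1) := by omega
  rw [h, h2, a_mid hn ha k hk (n - 1) (by omega) le_rfl]

lemma one_lt_cinv (hc0 : 0 < c) (hc1 : c < 1) : 1 < c⁻¹ := by
  rw [lt_inv_comm₀ (by norm_num) hc0]; simpa using hc1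

lemma ceil_lb (hc0 : 0 < c) (hc1 : c < 1) {A : ℕ} (hA : 1 ≤ A) :
    A + 1 ≤ ⌈c⁻¹ * (A : ℝ)⌉₊ := by
  rw [Nat.add_one_le_iff, Nat.lt_ceil]
  have h1 : (1 : ℝ) < c⁻¹ := one_lt_cinv hc0 hc1
  have h2 : (0 : ℝ) < A := by exact_mod_cast hA
  nlinarith

lemma ceil_pos' (hc0 : 0 < c) (hc1 : c < 1) {A : ℕ} (hA : 1 ≤ A) :
    1 ≤ ⌈c⁻¹ * (A : ℝ)⌉₊ := le_trans (by omega) (ceil_lb hc0 hc1 hA)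

lemma two_le_a (hn : 2 ≤ n) (hc0 : 0 < c) (hc1 : c < 1) (hM : ∀ k, 2 ≤ M k)
    (ha : IsConstrSeq n c M a) : ∀ k j, 1 ≤ j → j ≤ n → 2 ≤ a (n * k + j) := by
  intro k
  induction k with
  | zero =>
    intro j h1 h2
    have := ha.2.1 j h1 h2
    have hf : 1 ≤ Nat.factorial j := Nat.one_le_iff_ne_zero.mpr (Nat.factorial_ne_zero j)
    simp only [Nat.zero_eq, Nat.mul_zero, Nat.zero_add] at *
    omega
  | succ k ih =>
    intro j h1 h2
    have hk1 : 1 ≤ k + 1 := by omega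
    have hblock : n * (k + 1) = n * k + n := by ring
    have hprev : 2 ≤ a (n * (k + 1)) := by rw [hblock]; exact ih n (by omega) le_rfl
    have hA : 2 ≤ a (n * (k + 1) + 1) := by
      rw [ha.2.2.1 (k + 1) hk1]
      calc 2 ≤ a (n * (k + 1)) := hprev
        _ ≤ a (n * (k + 1)) ^ M (k + 1) := Nat.le_self_pow (by have := hM (k+1); omega) _
    rcases eq_or_lt_of_le h2 with h | h
    · -- j = n
      rw [h, a_last hn ha (k + 1) hk1]
      have h3 : 2 ≤ a (n * (k + 1) + 1) ^ (n - 1) :=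
        le_trans hA (Nat.le_self_pow (by omega) _)
      have h4 := ceil_pos' hc0 hc1 (A := a (n * (k + 1) + 1)) (by omega)
      calc 2 ≤ 1 * a (n * (k+1) + 1) ^ (n - 1) := by omega
        _ ≤ _ := Nat.mul_le_mul h4 le_rfl
    · -- j ≤ n - 1
      rw [a_mid hn ha (k + 1) hk1 j h1 (by omega)]
      exact le_trans hA (Nat.le_self_pow (by omega) _)

lemma two_le_a' (hn : 2 ≤ n) (hc0 : 0 < c) (hc1 : c < 1) (hM : ∀ k, 2 ≤ M k)
    (ha : IsConstrSeq n c M a) : ∀ m, 1 ≤ m → 2 ≤ a m := by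
  intro m hm
  obtain ⟨k, j, h1, h2, rfl⟩ := constr_decomp n (by omega) m hm
  exact two_le_a hn hc0 hc1 hM ha k j h1 h2

lemma a_grow (hn : 2 ≤ n) (hc0 : 0 < c) (hc1 : c < 1) (hM : ∀ k, 2 ≤ M k)
    (ha : IsConstrSeq n c M a) : ∀ m, 1 ≤ m → 2 * a m ≤ a (m + 1) := by
  intro m hm
  obtain ⟨k, j, h1, h2, rfl⟩ := constr_decomp n (by omega) m hm
  have h2a := two_le_a hn hc0 hc1 hM ha
  rcases Nat.eq_zero_or_pos k with rfl | hk
  · simp only [Nat.mul_zero, Nat.zero_add] at *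
    rcases eq_or_lt_of_le h2 with h | h
    · -- j = n : a (n+1) = a(n*1+1) = a(n*1)^(M 1)
      rw [h]
      have e1 : a (n + 1) = a n ^ M 1 := by
        have := ha.2.2.1 1 le_rfl; rw [mul_one] at this; exact this
      rw [e1]
      have hj2 : 2 ≤ a n := by
        have := h2a 0 n (by omega) le_rfl; rwa [Nat.mul_zero, Nat.zero_add] at this
      calc 2 * a n ≤ a n * a n := Nat.mul_le_mul_right _ hj2
        _ = a n ^ 2 := (sq _).symm
        _ ≤ _ := Nat.pow_le_pow_right (by omega) (hM 1)
    · -- j < n : factorials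
      have e1 := ha.2.1 j h1 h2
      have e2 := ha.2.1 (j + 1) (by omega) h
      rw [e1, e2, Nat.factorial_succ]
      have hf : 1 ≤ Nat.factorial j := Nat.one_le_iff_ne_zero.mpr (Nat.factorial_ne_zero j)
      have : 2 ≤ j + 1 := by omega
      calc 2 * (8 * Nat.factorial j) ≤ (j+1) * (8 * Nat.factorial j) := by
            exact Nat.mul_le_mul_right _ this
        _ = 8 * ((j+1) * Nat.factorial j) := by ring
  · -- k ≥ 1
    have hA : 2 ≤ a (n * k + 1) := h2a k 1 le_rfl (by omega)
    rcases eq_or_lt_of_le h2 with h | h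
    · -- j = n: next is a(n(k+1)+1) = a(nk+n)^(M (k+1))
      rw [h]
      have e1 : a (n * k + n + 1) = a (n * k + n) ^ M (k + 1) := by
        have := ha.2.2.1 (k + 1) (by omega)
        have hb : n * (k + 1) = n * k + n := by ring
        rw [hb] at this; exact this
      rw [e1]
      have h2x : 2 ≤ a (n * k + n) := h2a k n (by omega) le_rfl
      calc 2 * a (n * k + n) ≤ a (n * k + n) * a (n * k + n) := Nat.mul_le_mul_right _ h2x
        _ = a (n * k + n) ^ 2 := (sq _).symm
        _ ≤ _ := Nat.pow_le_pow_right (by omega) (hM (k + 1))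
    · rcases eq_or_lt_of_le (by omega : j ≤ n - 1) with h' | h'
      · -- j = n - 1 : next is a(nk+n) = E * A^(n-1)
        have e1 := a_last hn ha k hk
        have e2 := a_mid hn ha k hk j h1 (le_of_eq h')
        have hE := ceil_lb hc0 hc1 (A := a (n * k + 1)) (by omega)
        have hj1 : n * k + j + 1 = n * k + n := by omega
        rw [hj1, e1, e2, h']
        calc 2 * a (n * k + 1) ^ (n - 1) ≤ (a (n * k + 1) + 1) * a (n * k + 1) ^ (n - 1) := by
              exact Nat.mul_le_mul_right _ (by omega)
          _ ≤ _ := Nat.mul_le_mul_right _ hE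
      · -- j ≤ n - 2
        have e1 := a_mid hn ha k hk j h1 (by omega)
        have e2 := a_mid hn ha k hk (j + 1) (by omega) (by omega)
        rw [← Nat.add_assoc] at e2
        rw [e1, e2, pow_succ]
        calc 2 * a (n * k + 1) ^ j = a (n*k+1) ^ j * 2 := by ring
          _ ≤ _ := Nat.mul_le_mul_left _ hA

end Constr


section Constr2
variable {n : ℕ} {c : ℝ} {M : ℕ → ℕ} {a : ℕ → ℕ}
variable (hn : 2 ≤ n) (hc0 : 0 < c) (hc1 : c < 1) (hM : ∀ k, 2 ≤ M k)
  (ha : IsConstrSeq n c M a)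
include hn hc0 hc1 hM ha

lemma a_pos : ∀ m, 1 ≤ a m := by
  intro m
  rcases Nat.eq_zero_or_pos m with rfl | hm
  · rw [ha.1]
  · have := two_le_a' hn hc0 hc1 hM ha m hm; omega

lemma a_geom : ∀ m t, 1 ≤ m → 2 ^ t * a m ≤ a (m + t) := by
  intro m t hm
  induction t with
  | zero => simpa using le_rfl
  | succ t ih =>
    have h1 := a_grow hn hc0 hc1 hM ha (m + t) (by omega)
    calc 2 ^ (t+1) * a m = 2 * (2 ^ t * a m) := by ring
      _ ≤ 2 * a (m + t) := by omega
      _ ≤ a (m + t + 1) := h1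

lemma a_mono : ∀ m m', 1 ≤ m → m ≤ m' → a m ≤ a m' := by
  intro m m' hm h
  obtain ⟨t, rfl⟩ := Nat.exists_eq_add_of_le h
  have := a_geom hn hc0 hc1 hM ha m t hm
  have h2 : 1 ≤ 2 ^ t := Nat.one_le_two_pow
  nlinarith [a_pos hn hc0 hc1 hM ha m]

lemma pow_le_a : ∀ m, 1 ≤ m → 2 ^ m ≤ a m := by
  intro m hm
  obtain ⟨t, rfl⟩ : ∃ t, m = 1 + t := ⟨m - 1, by omega⟩
  have := a_geom hn hc0 hc1 hM ha 1 t (by omega)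
  have ha1 : a 1 = 8 := by
    have := ha.2.1 1 le_rfl (by omega); simpa [Nat.factorial] using this
  rw [ha1] at this
  calc 2 ^ (1 + t) = 2 ^ t * 2 := by ring
    _ ≤ 2 ^ t * 8 := by omega
    _ ≤ a (1 + t) := this

-- square divisibility
lemma a_sq_dvd : ∀ k j, 1 ≤ j → j ≤ n → a (n * k + j) ^ 2 ∣ a (n * (k + 1) + j) := by
  intro k j hj1 hjn
  have hb : ∀ t : ℕ, n * (t + 1) = n * t + n := fun t => by ring
  have hn1 : 1 ≤ n - 1 := by omega
  rcases Nat.eq_zero_or_pos k with rfl | hk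
  · -- k = 0
    have e0 : a (n * 0 + j) = 8 * Nat.factorial j := by
      rw [Nat.mul_zero, Nat.zero_add]; exact ha.2.1 j hj1 hjn
    have ean : a n = 8 * Nat.factorial n := ha.2.1 n (by omega) le_rfl
    have eA : a (n * 1 + 1) = a n ^ M 1 := ha.2.2.1 1 le_rfl |>.trans (by rw [mul_one])
    have hdvd : (8 * Nat.factorial j) ∣ (8 * Nat.factorial n) :=
      Nat.mul_dvd_mul_left 8 (Nat.factorial_dvd_factorial hjn)
    have g1 : n * (0 + 1) = n * 1 := by ring
    rcases eq_or_lt_of_le hjn with h | h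
    · -- j = n
      rw [e0, h, g1]
      rw [a_last hn ha 1 le_rfl, eA, ean]
      have : (8 * Nat.factorial n) ^ 2 ∣ ((8 * Nat.factorial n) ^ M 1) ^ (n - 1) := by
        rw [← pow_mul]
        exact pow_dvd_pow _ (by nlinarith [hM 1, hn1])
      exact Dvd.dvd.mul_left this _
    · -- j ≤ n - 1
      rw [e0, g1, a_mid hn ha 1 le_rfl j hj1 (by omega), eA, ean, ← pow_mul]
      calc (8 * Nat.factorial j) ^ 2 ∣ (8 * Nat.factorial n) ^ 2 := pow_dvd_pow_of_dvd hdvd 2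
        _ ∣ (8 * Nat.factorial n) ^ (M 1 * j) := pow_dvd_pow _ (by nlinarith [hM 1, hj1])
  · -- k ≥ 1
    have hk1 : 1 ≤ k + 1 := by omega
    have eA' : a (n * (k + 1) + 1) = a (n * (k + 1)) ^ M (k + 1) := ha.2.2.1 (k + 1) hk1
    have eblk : a (n * (k + 1)) = a (n * k + n) := by rw [hb k]
    have elast : a (n * k + n) = ⌈c⁻¹ * (a (n * k + 1) : ℝ)⌉₊ * a (n * k + 1) ^ (n - 1) :=
      a_last hn ha k hk
    have hA2 : a (n * k + 1) ^ 2 ∣ a (n * (k + 1) + 1) := by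
      rw [eA', eblk, elast]
      have h1 : a (n * k + 1) ∣ ⌈c⁻¹ * (a (n * k + 1) : ℝ)⌉₊ * a (n * k + 1) ^ (n - 1) :=
        Dvd.dvd.mul_left (dvd_pow_self _ (by omega)) _
      calc a (n * k + 1) ^ 2 ∣ (⌈c⁻¹ * (a (n * k + 1) : ℝ)⌉₊ * a (n * k + 1) ^ (n - 1)) ^ 2 :=
            pow_dvd_pow_of_dvd h1 2
        _ ∣ _ := pow_dvd_pow _ (hM (k + 1))
    rcases eq_or_lt_of_le hjn with h | h
    · -- j = n
      rw [h]
      rw [a_last hn ha (k + 1) hk1, eA', eblk]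
      have : a (n * k + n) ^ 2 ∣ (a (n * k + n) ^ M (k + 1)) ^ (n - 1) := by
        rw [← pow_mul]; exact pow_dvd_pow _ (by nlinarith [hM (k + 1), hn1])
      exact Dvd.dvd.mul_left this _
    · -- j ≤ n - 1
      rw [a_mid hn ha k hk j hj1 (by omega), a_mid hn ha (k + 1) hk1 j hj1 (by omega)]
      calc (a (n * k + 1) ^ j) ^ 2 = (a (n * k + 1) ^ 2) ^ j := by ring
        _ ∣ (a (n * (k + 1) + 1)) ^ j := pow_dvd_pow_of_dvd hA2 j


lemma spartial_red : ∀ k j, 1 ≤ j → j ≤ n →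
    ∃ p : ℕ, Nat.Coprime p (a (n * k + j)) ∧ Spartial a n j k = (p : ℚ) / (a (n * k + j) : ℚ) := by
  intro k
  induction k with
  | zero =>
    intro j hj1 hjn
    refine ⟨1, Nat.coprime_one_left _, ?_⟩
    simp [Spartial]
  | succ k ih =>
    intro j hj1 hjn
    obtain ⟨p, hcop, heq⟩ := ih j hj1 hjn
    set d := a (n * k + j) with hd
    set d' := a (n * (k + 1) + j) with hd'
    have hd2 : 2 ≤ d := two_le_a' hn hc0 hc1 hM ha _ (by omega)
    have hd'2 : 2 ≤ d' := two_le_a' hn hc0 hc1 hM ha _ (le_trans hj1 (Nat.le_add_left _ _))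
    have hsq : d ^ 2 ∣ d' := a_sq_dvd hn hc0 hc1 hM ha k j hj1 hjn
    have hdd : d ∣ d' := dvd_trans (dvd_pow_self d (by omega)) hsq
    set r := d' / d with hr
    have hrd : d' = d * r := by rw [hr, Nat.mul_div_cancel' hdd]
    have hdr : d ∣ r := by
      have : d * d ∣ d * r := by rw [← hrd]; rw [← sq]; exact hsq
      exact (Nat.mul_dvd_mul_iff_left (by omega : 0 < d)).mp this
    refine ⟨p * r + 1, ?_, ?_⟩
    · have h1 : Nat.Coprime (p * r + 1) r := by
        have := (Nat.coprime_add_mul_right_left 1 r p).mpr (Nat.coprime_one_left r)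
        rwa [Nat.add_comm] at this
      have h2 : d' ∣ r * r := by
        rw [hrd]; exact Nat.mul_dvd_mul_right hdr r
      exact Nat.Coprime.coprime_dvd_right h2 (h1.mul_right h1)
    · have hsum : Spartial a n j (k + 1) = Spartial a n j k + 1 / (d' : ℚ) := by
        rw [Spartial, Spartial, Finset.sum_range_succ]
      rw [hsum, heq]
      have hdq : (d : ℚ) ≠ 0 := by positivity
      have hrq : (r : ℚ) ≠ 0 := by
        have h0 : r ≠ 0 := by intro h0; rw [h0, Nat.mul_zero] at hrd; omega
        exact_mod_cast h0
      have hcast : (d' : ℚ) = (d : ℚ) * (r : ℚ) := by exact_mod_cast congrArg Nat.cast hrd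
      rw [hcast]
      field_simp
      push_cast
      ring

lemma summable_xi (j : ℕ) (hj : 1 ≤ j) :
    Summable (fun h : ℕ => (1 : ℝ) / (a (n * h + j))) := by
  apply Summable.of_nonneg_of_le (fun h => by positivity) (fun h => ?_)
    (summable_geometric_two)
  have h1 : 2 ^ h ≤ a (n * h + j) := by
    calc 2 ^ h ≤ 2 ^ (n * h + j) := Nat.pow_le_pow_right (by omega) (by nlinarith)
      _ ≤ a (n * h + j) := pow_le_a hn hc0 hc1 hM ha _ (by omega)
  have h2 : ((2 : ℝ)) ^ h ≤ (a (n * h + j) : ℝ) := by exact_mod_cast h1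
  rw [one_div]
  calc (a (n * h + j) : ℝ)⁻¹ ≤ ((2 : ℝ) ^ h)⁻¹ := by
        apply inv_anti₀ (by positivity) h2
    _ = (1 / 2 : ℝ) ^ h := by rw [one_div, inv_pow]
  
lemma xi_split (j k : ℕ) (hj : 1 ≤ j) :
    xiCoord a n j = ((Spartial a n j k : ℚ) : ℝ)
      + ∑' h : ℕ, (1 : ℝ) / (a (n * (h + (k + 1)) + j)) := by
  have hsum := summable_xi hn hc0 hc1 hM ha j hj
  have h1 := Summable.sum_add_tsum_nat_add (f := fun h : ℕ => (1 : ℝ) / (a (n * h + j))) (k + 1) hsum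
  have h2 : ((Spartial a n j k : ℚ) : ℝ) = ∑ h ∈ Finset.range (k + 1), (1 : ℝ) / (a (n * h + j)) := by
    rw [Spartial]
    push_cast
    rfl
  rw [xiCoord, ← h1, h2]

lemma tail_nonneg (j k : ℕ) :
    0 ≤ ∑' h : ℕ, (1 : ℝ) / (a (n * (h + (k + 1)) + j)) :=
  tsum_nonneg (fun h => by positivity)

lemma tail_le (j k : ℕ) (hj : 1 ≤ j) :
    ∑' h : ℕ, (1 : ℝ) / (a (n * (h + (k + 1)) + j)) ≤ 2 / (a (n * (k + 1) + j)) := by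
  have hsum : Summable (fun h : ℕ => (1 : ℝ) / (a (n * (h + (k + 1)) + j))) :=
    (summable_nat_add_iff (f := fun h : ℕ => (1 : ℝ) / (a (n * h + j))) (k + 1)).mpr
      (summable_xi hn hc0 hc1 hM ha j hj)
  set B := a (n * (k + 1) + j) with hB
  have hB1 : 1 ≤ B := le_trans (by omega) (two_le_a' hn hc0 hc1 hM ha _ (le_trans hj (Nat.le_add_left _ _)))
  have hBpos : (0 : ℝ) < B := by exact_mod_cast hB1
  have hle : ∀ h : ℕ, (1 : ℝ) / (a (n * (h + (k + 1)) + j)) ≤ (1 / 2 : ℝ) ^ h * (1 / B) := by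
    intro h
    have hidx : n * (h + (k + 1)) + j = (n * (k + 1) + j) + n * h := by ring
    have hg : 2 ^ (n * h) * B ≤ a (n * (h + (k + 1)) + j) := by
      rw [hidx]
      exact a_geom hn hc0 hc1 hM ha _ (n * h) (le_trans hj (Nat.le_add_left _ _))
    have h2 : 2 ^ h * B ≤ a (n * (h + (k + 1)) + j) := by
      have : (2:ℕ) ^ h ≤ 2 ^ (n * h) := Nat.pow_le_pow_right (by omega) (by nlinarith)
      nlinarith
    have h2' : (2 : ℝ) ^ h * B ≤ (a (n * (h + (k + 1)) + j) : ℝ) := by exact_mod_cast h2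
    have e1 : (1 / 2 : ℝ) ^ h * (1 / B) = 1 / ((2:ℝ) ^ h * B) := by
      rw [div_pow, one_pow, one_div_mul_one_div]
    rw [e1]
    exact one_div_le_one_div_of_le (by positivity) h2'
  calc ∑' h : ℕ, (1 : ℝ) / (a (n * (h + (k + 1)) + j))
      ≤ ∑' h : ℕ, (1 / 2 : ℝ) ^ h * (1 / B) := by
        apply Summable.tsum_le_tsum hle hsum
        exact summable_geometric_two.mul_right _
    _ = (∑' h : ℕ, (1 / 2 : ℝ) ^ h) * (1 / B) := tsum_mul_right
    _ = 2 * (1 / B) := by rw [tsum_geometric_two]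
    _ = 2 / B := by ring


end Constr2

section Constr3
variable {n : ℕ} {c : ℝ} {M : ℕ → ℕ} {a : ℕ → ℕ}
variable (hn : 2 ≤ n) (hc0 : 0 < c) (hc1 : c < 1) (hM : ∀ k, 2 ≤ M k)
  (ha : IsConstrSeq n c M a)
include hn hc0 hc1 hM ha

lemma k_lt_aA (k : ℕ) (hk : 1 ≤ k) : k + 1 ≤ a (n * k + 1) := by
  have h1 : 2 ^ (n * k + 1) ≤ a (n * k + 1) := pow_le_a hn hc0 hc1 hM ha _ (by omega)
  have h2 : k < 2 ^ k := Nat.lt_two_pow_self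
  have h3 : (2:ℕ) ^ k ≤ 2 ^ (n * k + 1) := Nat.pow_le_pow_right (by omega) (by nlinarith)
  omega

open Fin.NatCast in
lemma key_lb (k : ℕ) (hk : 1 ≤ k) (b : Fin (n + 1) → ℤ) (hb : b ≠ 0)
    (hbd : ∀ i : Fin n, |b i.succ| ≤ (a (n * k + 1) : ℤ) - 1) :
    1 / (a (n * k + n) : ℚ)
      ≤ |(b 0 : ℚ) + ∑ i : Fin n, (b i.succ : ℚ) * Spartial a n (i.val + 1) k| := by
  classical
  set A := a (n * k + 1) with hAdef
  set E := ⌈c⁻¹ * (A : ℝ)⌉₊ with hEdef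
  have hA : 2 ≤ A := two_le_a' hn hc0 hc1 hM ha _ (by omega)
  have hE : A + 1 ≤ E := ceil_lb hc0 hc1 (by omega)
  have edn : a (n * k + n) = E * A ^ (n - 1) := a_last hn ha k hk
  have emid : ∀ j, 1 ≤ j → j ≤ n - 1 → a (n * k + j) = A ^ j := a_mid hn ha k hk
  -- numerators
  have hex := spartial_red hn hc0 hc1 hM ha k
  set p : ℕ → ℕ := fun j => if h : 1 ≤ j ∧ j ≤ n then (hex j h.1 h.2).choose else 1 with hpdef
  have hp : ∀ j, 1 ≤ j → j ≤ n → Nat.Coprime (p j) (a (n * k + j)) ∧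
      Spartial a n j k = (p j : ℚ) / (a (n * k + j) : ℚ) := by
    intro j h1 h2
    simp only [hpdef, dif_pos (And.intro h1 h2)]
    exact (hex j h1 h2).choose_spec
  -- integer coefficients
  set β : ℕ → ℤ := fun j => b ((j : ℕ) : Fin (n + 1)) with hβdef
  have hfineq : ∀ i : Fin n, ((i.val + 1 : ℕ) : Fin (n + 1)) = i.succ := by
    intro i
    apply Fin.ext
    rw [Fin.val_natCast, Fin.val_succ]
    exact Nat.mod_eq_of_lt (by omega)
  have hβb : ∀ i : Fin n, β (i.val + 1) = b i.succ := by
    intro i; rw [hβdef]; simp only []; rw [hfineq i]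
  have hβ0 : β 0 = b 0 := by rw [hβdef]; norm_num
  have hβbd : ∀ j, 1 ≤ j → j ≤ n → |β j| ≤ (A : ℤ) - 1 := by
    intro j h1 h2
    have hlt : j - 1 < n := by omega
    have : β j = b (Fin.succ ⟨j - 1, hlt⟩) := by
      rw [hβdef]; simp only []
      congr 1
      apply Fin.ext
      rw [Fin.val_natCast, Fin.val_succ]
      simp only []
      rw [Nat.mod_eq_of_lt (by omega : j < n + 1)]
      omega
    rw [this]
    exact hbd _
  -- the integer N
  set N : ℤ := β 0 * ((E : ℤ) * (A : ℤ) ^ (n - 1))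
      + (E : ℤ) * (∑ i ∈ Finset.range (n - 1), β (i + 1) * (p (i + 1) : ℤ) * (A : ℤ) ^ (n - 2 - i))
      + β n * (p n : ℤ) with hNdef
  have hdn1 : 1 ≤ a (n * k + n) := le_trans (by omega) (two_le_a' hn hc0 hc1 hM ha _ (by omega))
  have hdnq : ((a (n * k + n) : ℕ) : ℚ) ≠ 0 := by
    exact_mod_cast Nat.one_le_iff_ne_zero.mp hdn1
  have hAq : ((A : ℕ) : ℚ) ≠ 0 := by exact_mod_cast (by omega : A ≠ 0)
  -- rewrite the Fin sum as a range sum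
  have hfin : ∑ i : Fin n, (b i.succ : ℚ) * Spartial a n (i.val + 1) k
      = ∑ j ∈ Finset.range n, (β (j + 1) : ℚ) * Spartial a n (j + 1) k := by
    rw [← Fin.sum_univ_eq_sum_range (fun j => (β (j + 1) : ℚ) * Spartial a n (j + 1) k) n]
    exact Finset.sum_congr rfl (fun i _ => by rw [hβb i])
  have hrange : Finset.range n = Finset.range ((n - 1) + 1) := by
    rw [Nat.sub_add_cancel (by omega : 1 ≤ n)]
  -- main identity
  have hZ : (b 0 : ℚ) + ∑ i : Fin n, (b i.succ : ℚ) * Spartial a n (i.val + 1) k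
      = (N : ℚ) / (a (n * k + n) : ℚ) := by
    rw [hfin, eq_div_iff hdnq, add_mul, Finset.sum_mul]
    rw [hrange, Finset.sum_range_succ, Nat.sub_add_cancel (by omega : 1 ≤ n)]
    have hterm : ∀ j ∈ Finset.range (n - 1),
        (β (j + 1) : ℚ) * Spartial a n (j + 1) k * (a (n * k + n) : ℚ)
        = ((β (j + 1) * (p (j + 1) : ℤ) * (A : ℤ) ^ (n - 2 - j) * (E : ℤ) : ℤ) : ℚ) := by
      intro j hj
      rw [Finset.mem_range] at hj
      have h1 : 1 ≤ j + 1 := by omega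
      have h2 : j + 1 ≤ n - 1 := by omega
      have hS := (hp (j + 1) h1 (by omega)).2
      rw [hS, emid (j + 1) h1 h2, edn]
      have hpow : (A : ℚ) ^ (n - 1) = (A : ℚ) ^ (n - 2 - j) * (A : ℚ) ^ (j + 1) := by
        rw [← pow_add]
        congr 1
        omega
      push_cast
      rw [hpow]
      have hApow : ((A : ℚ)) ^ (j + 1) ≠ 0 := by positivity
      field_simp
    rw [Finset.sum_congr rfl hterm]
    have hlast : (β n : ℚ) * Spartial a n n k * (a (n * k + n) : ℚ) = (β n : ℚ) * (p n : ℚ) := by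
      have hS := (hp n (by omega) le_rfl).2
      rw [hS]
      field_simp
    rw [hlast, hNdef, hβ0, edn]
    push_cast
    rw [← Finset.sum_mul]
    ring
  -- N ≠ 0
  have hNne : N ≠ 0 := by
    intro h0
    have hall := descend n hn A E hA hE p
      (fun j h1 h2 => by
        have := (hp j h1 (by omega)).1
        rw [emid j h1 h2] at this
        exact this.coprime_dvd_right (dvd_pow_self A (by omega)))
      (by
        have := (hp n (by omega) le_rfl).1
        rw [edn] at this
        exact this.coprime_dvd_right (dvd_mul_right E _))
      β hβbd (by rw [← hNdef]; exact h0)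
    apply hb
    funext i
    have hiv : ((i.val : ℕ) : Fin (n + 1)) = i := Fin.cast_val_eq_self i
    have : b i = β i.val := by rw [hβdef]; simp only []; rw [hiv]
    rw [this]
    exact hall i.val (by omega)
  -- conclude
  rw [hZ, abs_div, abs_of_pos (by positivity : (0:ℚ) < (a (n * k + n) : ℚ))]
  rw [div_le_div_iff_of_pos_right (by positivity : (0:ℚ) < (a (n * k + n) : ℚ))]
  have h1 : (1 : ℤ) ≤ |N| := Int.one_le_abs (by exact_mod_cast hNne)
  exact_mod_cast h1


end Constr3
set_option maxHeartbeats 1600000 in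
theorem theta_star_lower (n : ℕ) (hn : 2 ≤ n) (c : ℝ) (hc : c ∈ Set.Ioo (0:ℝ) 1) :
    ∃ M : ℕ → ℕ, (∀ k, 2 ≤ M k) ∧ ∀ a : ℕ → ℕ, IsConstrSeq n c M a →
      (∀ ε : ℝ, 0 < ε → ∃ k0 : ℕ, ∀ k, k0 ≤ k → ∀ b : Fin (n + 1) → ℤ, b ≠ 0 →
        (∀ i : Fin n, |b i.succ| ≤ (a (n * k + 1) : ℤ) - 1) →
        c * (1 - ε) / ((a (n * k + 1) : ℝ) - 1) ^ n
          ≤ |(b 0 : ℝ) + ∑ i : Fin n, (b i.succ : ℝ) * xVec a n i|) ∧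
      c ≤ thetaStar (xVec a n) := by
  obtain ⟨hc0, hc1⟩ := hc
  refine ⟨fun _ => 2, fun _ => le_rfl, ?_⟩
  intro a ha
  set M : ℕ → ℕ := fun _ => 2 with hM'
  have hM : ∀ k, 2 ≤ M k := fun _ => le_rfl
  -- Part 1
  have part1 : ∀ ε : ℝ, 0 < ε → ∃ k0 : ℕ, ∀ k, k0 ≤ k → ∀ b : Fin (n + 1) → ℤ, b ≠ 0 →
      (∀ i : Fin n, |b i.succ| ≤ (a (n * k + 1) : ℤ) - 1) →
      c * (1 - ε) / ((a (n * k + 1) : ℝ) - 1) ^ n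
        ≤ |(b 0 : ℝ) + ∑ i : Fin n, (b i.succ : ℝ) * xVec a n i| := by
    intro ε hε
    rcases le_or_gt 1 ε with hε1 | hε1
    · -- trivial case ε ≥ 1
      refine ⟨1, fun k hk b hb hbd => ?_⟩
      have hA2 : 2 ≤ a (n * k + 1) := two_le_a' hn hc0 hc1 hM ha _ (by omega)
      have hA2r : (2:ℝ) ≤ (a (n * k + 1) : ℝ) := by exact_mod_cast hA2
      have hXp : (0:ℝ) < (a (n * k + 1) : ℝ) - 1 := by linarith
      have h1 : c * (1 - ε) ≤ 0 := by nlinarith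
      have h2 : c * (1 - ε) / ((a (n * k + 1) : ℝ) - 1) ^ n ≤ 0 :=
        div_nonpos_of_nonpos_of_nonneg h1 (by positivity)
      exact le_trans h2 (abs_nonneg _)
    · -- main case
      obtain ⟨K, hK⟩ := exists_nat_ge (max (2 ^ (n + 2) / ε + 1) (2 ^ (n + 2) * n / (c * ε)))
      refine ⟨K + 1, fun k hk b hb hbd => ?_⟩
      have hk1 : 1 ≤ k := by omega
      set A := a (n * k + 1) with hAdef
      set Ar := (A : ℝ) with hArdef
      have hA2 : 2 ≤ A := two_le_a' hn hc0 hc1 hM ha _ (by omega)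
      have hAk : k + 1 ≤ A := k_lt_aA hn hc0 hc1 hM ha k hk1
      have hKA : (K : ℝ) ≤ Ar := by
        rw [hArdef]
        exact_mod_cast (show K ≤ A by omega)
      have hAr_1 : 2 ^ (n + 2) / ε + 1 ≤ Ar :=
        le_trans (le_trans (le_max_left _ _) hK) hKA
      have hAr_2 : 2 ^ (n + 2) * n / (c * ε) ≤ Ar :=
        le_trans (le_trans (le_max_right _ _) hK) hKA
      have hA2r : (2:ℝ) ≤ Ar := by rw [hArdef]; exact_mod_cast hA2
      -- denominator facts
      set E := ⌈c⁻¹ * (A : ℝ)⌉₊ with hEdef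
      have edn : a (n * k + n) = E * A ^ (n - 1) := a_last hn ha k hk1
      set dnn := a (n * k + n) with hdnn
      set dnr := (dnn : ℝ) with hdnr
      have hEub : (E : ℝ) < c⁻¹ * Ar + 1 := Nat.ceil_lt_add_one (by positivity)
      have hElb : A + 1 ≤ E := ceil_lb hc0 hc1 (by omega)
      have hElbr : Ar + 1 ≤ (E : ℝ) := by rw [hArdef]; exact_mod_cast hElb
      have hcinv : (1:ℝ) ≤ c⁻¹ := le_of_lt (one_lt_cinv hc0 hc1)
      have hdnr_eq : dnr = (E : ℝ) * Ar ^ (n - 1) := by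
        rw [hdnr, hArdef, edn]; push_cast; ring
      have hpowsucc : Ar ^ (n - 1) * Ar = Ar ^ n := by
        rw [← pow_succ]; congr 1; omega
      have hpowsucc' : (Ar + 1) ^ (n - 1) * (Ar + 1) = (Ar + 1) ^ n := by
        rw [← pow_succ]; congr 1; omega
      have hArpos : (0:ℝ) < Ar := by linarith
      have hdn_low : Ar ^ n ≤ dnr := by
        rw [hdnr_eq, ← hpowsucc]
        have : (0:ℝ) < Ar ^ (n - 1) := by positivity
        nlinarith
      have hdn_up : dnr ≤ c⁻¹ * (Ar + 1) ^ n := by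
        rw [hdnr_eq]
        have h1 : Ar ^ (n - 1) ≤ (Ar + 1) ^ (n - 1) :=
          pow_le_pow_left₀ (by positivity) (by linarith) _
        have h2 : (E : ℝ) ≤ c⁻¹ * (Ar + 1) := by nlinarith
        calc (E : ℝ) * Ar ^ (n - 1) ≤ (c⁻¹ * (Ar + 1)) * (Ar + 1) ^ (n - 1) := by
              apply mul_le_mul h2 h1 (by positivity) (by positivity)
          _ = c⁻¹ * ((Ar + 1) ^ (n - 1) * (Ar + 1)) := by ring
          _ = c⁻¹ * (Ar + 1) ^ n := by rw [hpowsucc']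
      -- next block
      set A' := (a (n * (k + 1) + 1) : ℝ) with hA'def
      have hA'sq : dnr ^ 2 ≤ A' := by
        have e1 : a (n * (k + 1) + 1) = a (n * (k + 1)) ^ M (k + 1) := ha.2.2.1 (k + 1) (by omega)
        have e2 : n * (k + 1) = n * k + n := by ring
        have e3 : a (n * (k + 1) + 1) = dnn ^ M (k + 1) := by rw [e1, e2]
        have : dnn ^ 2 ≤ dnn ^ M (k + 1) :=
          Nat.pow_le_pow_right (le_trans (by omega) (two_le_a' hn hc0 hc1 hM ha _ (by omega)))
            (hM (k + 1))
        rw [hA'def, e3, hdnr]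
        exact_mod_cast this
      have hdnrpos : (0:ℝ) < dnr := by
        rw [hdnr]
        exact_mod_cast (show 0 < dnn by
          have := two_le_a' hn hc0 hc1 hM ha (n * k + n) (by omega); omega)
      have hA'pos : (0:ℝ) < A' := lt_of_lt_of_le (pow_pos hdnrpos 2) hA'sq
      -- tails
      set T : Fin n → ℝ := fun i => ∑' h : ℕ, (1 : ℝ) / (a (n * (h + (k + 1)) + (i.val + 1)))
        with hT
      have hxVec : ∀ i : Fin n, xVec a n i
          = ((Spartial a n (i.val + 1) k : ℚ) : ℝ) + T i := by
        intro i
        show xiCoord a n (i.val + 1) = _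
        rw [hT]
        exact xi_split hn hc0 hc1 hM ha (i.val + 1) k (by omega)
      have hT0 : ∀ i : Fin n, 0 ≤ T i := fun i => tail_nonneg hn hc0 hc1 hM ha _ _
      have hTle : ∀ i : Fin n, T i ≤ 2 / A' := by
        intro i
        have h1 : T i ≤ 2 / (a (n * (k + 1) + (i.val + 1)) : ℝ) :=
          tail_le hn hc0 hc1 hM ha (i.val + 1) k (by omega)
        have h2 : a (n * (k + 1) + 1) ≤ a (n * (k + 1) + (i.val + 1)) :=
          a_mono hn hc0 hc1 hM ha _ _ (le_trans (by omega) (Nat.le_add_left 1 _)) (by omega)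
        have h2r : A' ≤ (a (n * (k + 1) + (i.val + 1)) : ℝ) := by
          rw [hA'def]; exact_mod_cast h2
        refine le_trans h1 ?_
        gcongr
      -- split the linear form
      set R : ℝ := (b 0 : ℝ) + ∑ i : Fin n, (b i.succ : ℝ) * ((Spartial a n (i.val + 1) k : ℚ) : ℝ)
        with hR
      have hLsplit : (b 0 : ℝ) + ∑ i : Fin n, (b i.succ : ℝ) * xVec a n i
          = R + ∑ i : Fin n, (b i.succ : ℝ) * T i := by
        have e : ∀ i ∈ Finset.univ, (b i.succ : ℝ) * xVec a n i
            = (b i.succ : ℝ) * ((Spartial a n (i.val + 1) k : ℚ) : ℝ)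
              + (b i.succ : ℝ) * T i := fun i _ => by rw [hxVec i]; ring
        have e2 : ∑ i : Fin n, (b i.succ : ℝ) * xVec a n i
            = (∑ i : Fin n, (b i.succ : ℝ) * ((Spartial a n (i.val + 1) k : ℚ) : ℝ))
              + ∑ i : Fin n, (b i.succ : ℝ) * T i :=
          (Finset.sum_congr rfl e).trans Finset.sum_add_distrib
        rw [e2, hR]
        ring
      -- lower bound for R
      have hkey := key_lb hn hc0 hc1 hM ha k hk1 b hb hbd
      have hRlb : 1 / dnr ≤ |R| := by
        have hkey' : ((1 / (a (n * k + n) : ℚ) : ℚ) : ℝ)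
            ≤ ((|(b 0 : ℚ) + ∑ i : Fin n, (b i.succ : ℚ) * Spartial a n (i.val + 1) k| : ℚ) : ℝ) :=
          by exact_mod_cast hkey
        push_cast at hkey'
        rw [hR, hdnr, hdnn]
        exact hkey'
      -- bound on the tail sum
      have htailsum : |∑ i : Fin n, (b i.succ : ℝ) * T i| ≤ n * ((Ar - 1) * (2 / A')) := by
        calc |∑ i : Fin n, (b i.succ : ℝ) * T i| ≤ ∑ i : Fin n, |(b i.succ : ℝ) * T i| :=
              Finset.abs_sum_le_sum_abs _ _
          _ ≤ ∑ _i : Fin n, (Ar - 1) * (2 / A') := by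
              apply Finset.sum_le_sum
              intro i _
              rw [abs_mul, abs_of_nonneg (hT0 i)]
              have hb1 : |(b i.succ : ℝ)| ≤ Ar - 1 := by
                have := hbd i
                have h2 : ((|b i.succ| : ℤ) : ℝ) ≤ ((A : ℤ) : ℝ) - 1 := by exact_mod_cast this
                rw [← Int.cast_abs] at *
                simpa using h2
              apply mul_le_mul hb1 (hTle i) (hT0 i) (by linarith)
          _ = n * ((Ar - 1) * (2 / A')) := by
              rw [Finset.sum_const, Finset.card_univ, Fintype.card_fin, nsmul_eq_mul]
      -- numeric estimate
      have hnum := final_numeric n hn c ε hc0 hc1 hε hε1 Ar dnr A' hAr_1 hAr_2 hdn_up hdn_low hA'sq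
      rw [hLsplit]
      have habs : |R| - |∑ i : Fin n, (b i.succ : ℝ) * T i| ≤ |R + ∑ i : Fin n, (b i.succ : ℝ) * T i| := by
        have := abs_add_le (R + ∑ i : Fin n, (b i.succ : ℝ) * T i) (-(∑ i : Fin n, (b i.succ : ℝ) * T i))
        simp only [add_neg_cancel_right, abs_neg] at this
        linarith
      have hfin : c * (1 - ε) / (Ar - 1) ^ n ≤ |R + ∑ i : Fin n, (b i.succ : ℝ) * T i| := by
        have h9 : (n:ℝ) * ((Ar - 1) * (2 / A')) = 2 * n * (Ar - 1) / A' := by ring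
        rw [h9] at htailsum
        calc c * (1 - ε) / (Ar - 1) ^ n ≤ 1 / dnr - 2 * n * (Ar - 1) / A' := hnum
          _ ≤ |R| - |∑ i : Fin n, (b i.succ : ℝ) * T i| := by linarith
          _ ≤ _ := habs
      exact hfin
  refine ⟨part1, ?_⟩
  -- Part 2: c ≤ thetaStar
  have hbdd : Filter.IsBoundedUnder (· ≤ ·) Filter.atTop
      (fun Q : ℕ => (Q : ℝ) ^ n * psiStar (xVec a n) Q) := by
    refine ⟨1, ?_⟩
    rw [Filter.eventually_map]
    filter_upwards [Filter.eventually_ge_atTop 1] with Q hQ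
    have h1 := dirichlet_psi (by omega) (xVec a n) Q hQ
    have hQp : (0:ℝ) < (Q : ℝ) ^ n := by
      have : (1:ℝ) ≤ (Q:ℝ) := by exact_mod_cast hQ
      positivity
    calc (Q : ℝ) ^ n * psiStar (xVec a n) Q ≤ (Q : ℝ) ^ n * (1 / (Q : ℝ) ^ n) := by
          apply mul_le_mul_of_nonneg_left h1 (le_of_lt hQp)
      _ = 1 := by field_simp
  have hfreq : ∀ ε : ℝ, 0 < ε →
      ∃ᶠ Q : ℕ in Filter.atTop, c * (1 - ε) ≤ (Q : ℝ) ^ n * psiStar (xVec a n) Q := by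
    intro ε hε
    obtain ⟨k0, hk0⟩ := part1 ε hε
    rw [Filter.frequently_atTop]
    intro m
    set k := max (k0 + 1) (m + 1) with hkdef
    have hk1 : 1 ≤ k := by omega
    have hkk0 : k0 ≤ k := by omega
    set A := a (n * k + 1) with hAdef
    have hA2 : 2 ≤ A := two_le_a' hn hc0 hc1 hM ha _ (by omega)
    have hAk : k + 1 ≤ A := k_lt_aA hn hc0 hc1 hM ha k hk1
    set Q := A - 1 with hQdef
    have hQ1 : 1 ≤ Q := by omega
    have hQcast : ((Q : ℕ) : ℝ) = (A : ℝ) - 1 := by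
      rw [hQdef]; push_cast [Nat.cast_sub (by omega : 1 ≤ A)]; ring
    have hQZ : ((Q : ℕ) : ℤ) = (A : ℤ) - 1 := by
      rw [hQdef]; push_cast [Nat.cast_sub (by omega : 1 ≤ A)]; ring
    refine ⟨Q, by omega, ?_⟩
    have hψ : c * (1 - ε) / ((A : ℝ) - 1) ^ n ≤ psiStar (xVec a n) Q := by
      apply le_csInf (psiSet_nonempty (xVec a n) Q)
      rintro r ⟨b, hb, hbd, rfl⟩
      apply hk0 k hkk0 b hb
      intro i
      have := hbd i
      rw [hQZ] at this
      exact this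
    have hQpos : (0:ℝ) < ((Q:ℕ):ℝ) ^ n := by
      have : (1:ℝ) ≤ ((Q:ℕ):ℝ) := by exact_mod_cast hQ1
      positivity
    calc c * (1 - ε) = ((Q:ℕ):ℝ) ^ n * (c * (1 - ε) / ((Q:ℕ):ℝ) ^ n) := by
          field_simp
      _ ≤ ((Q:ℕ):ℝ) ^ n * psiStar (xVec a n) Q := by
          apply mul_le_mul_of_nonneg_left ?_ (le_of_lt hQpos)
          rw [hQcast]
          exact hψ
  by_contra hlt
  push_neg at hlt
  set L := thetaStar (xVec a n) with hL
  set ε : ℝ := min (1/2) ((c - L) / (2 * c)) with hε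
  have hεpos : 0 < ε := by
    apply lt_min (by norm_num)
    apply div_pos (by linarith) (by linarith)
  have hle0 := Filter.le_limsup_of_frequently_le (hfreq ε hεpos) hbdd
  have hle : c * (1 - ε) ≤ L := by rw [hL]; unfold thetaStar; exact hle0
  have hcε : c * ε ≤ (c - L) / 2 := by
    have h1 : ε ≤ (c - L) / (2 * c) := min_le_right _ _
    have h2 : c * ε ≤ c * ((c - L) / (2 * c)) := mul_le_mul_of_nonneg_left h1 (le_of_lt hc0)
    have h3 : c * ((c - L) / (2 * c)) = (c - L) / 2 := by
      field_simp
    linarith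
  have : c * (1 - ε) = c - c * ε := by ring
  rw [this] at hle
  have : L < c - (c - L) / 2 := by linarith
  linarith
end
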